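/- arXiv:1107.2503 — 7 statements merged into one kernel-verified Lean document; each statement's English description precedes it below -/
import Mathlib

section
/- Let X be a complete normed real vector space, let h : X → X be a bijection whose inverse h⁻¹ is Lipschitz with constant κ ≥ 0, and let e : X → X be Lipschitz with constant μ ≥ 0, with κμ < 1. Fix y ∈ X, let x₀ ∈ X be arbitrary, and define the quasi-Newton sequence by x_{k+1} = h⁻¹(y − e(x_k)) (i.e. h(x_{k+1}) + e(x_k) = y). Then ‖x_{k+1} − x_k‖ ≤ κμ ‖x_k − x_{k−1}‖ for all k ≥ 1, the sequence (x_k) converges to a point x* satisfying h(x*) + e(x*) = y, and ‖x_k − x*‖ ≤ (κμ)^k ‖x₁ − x₀‖ / (1 − κμ) for all k (geometric convergence). -/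
open Filter

/-! The quasi-Newton step `z ↦ h⁻¹ (y - e z)` is `κμ`-Lipschitz, hence a contraction, and a fixed
point of it solves `h z + e z = y`. The quasi-Newton sequence is the orbit of `x₀` under this
contraction, so the Banach fixed point theorem supplies the limit and the a priori error bound. -/

def quasiNewtonStep {X : Type*} [Sub X] (hinv e : X → X) (y z : X) : X :=
  hinv (y - e z)

theorem eq_iterate_of_forall_succ_eq {α : Type*} {f : α → α} {x : ℕ → α}
    (hx : ∀ k, x (k + 1) = f (x k)) (k : ℕ) : x k = f^[k] (x 0) := by
  induction k with
  | zero => rfl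
  | succ k ih => rw [hx, ih, Function.iterate_succ_apply']

section QuasiNewton

variable {X : Type*} [NormedAddCommGroup X] {hinv e : X → X} {κ μ : ℝ}

theorem norm_quasiNewtonStep_sub_le (hκ : 0 ≤ κ)
    (hinvLip : ∀ a b, ‖hinv a - hinv b‖ ≤ κ * ‖a - b‖)
    (heLip : ∀ a b, ‖e a - e b‖ ≤ μ * ‖a - b‖) (y a b : X) :
    ‖quasiNewtonStep hinv e y a - quasiNewtonStep hinv e y b‖ ≤ κ * μ * ‖a - b‖ :=
  calc ‖hinv (y - e a) - hinv (y - e b)‖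
      _ ≤ κ * ‖(y - e a) - (y - e b)‖ := hinvLip _ _
      _ = κ * ‖e b - e a‖ := by rw [sub_sub_sub_cancel_left]
      _ ≤ κ * (μ * ‖b - a‖) := mul_le_mul_of_nonneg_left (heLip _ _) hκ
      _ = κ * μ * ‖a - b‖ := by rw [norm_sub_rev, mul_assoc]

theorem contractingWith_quasiNewtonStep (hκ : 0 ≤ κ) (hμ : 0 ≤ μ) (hκμ : κ * μ < 1)
    (hinvLip : ∀ a b, ‖hinv a - hinv b‖ ≤ κ * ‖a - b‖)
    (heLip : ∀ a b, ‖e a - e b‖ ≤ μ * ‖a - b‖) (y : X) :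
    ContractingWith (κ * μ).toNNReal (quasiNewtonStep hinv e y) :=
  ⟨Real.toNNReal_lt_one.2 hκμ, LipschitzWith.of_dist_le_mul fun a b => by
    rw [dist_eq_norm, dist_eq_norm, Real.coe_toNNReal _ (mul_nonneg hκ hμ)]
    exact norm_quasiNewtonStep_sub_le hκ hinvLip heLip y a b⟩

theorem add_eq_of_isFixedPt_quasiNewtonStep {h : X → X} (hri : Function.RightInverse hinv h)
    {y z : X} (hz : Function.IsFixedPt (quasiNewtonStep hinv e y) z) : h z + e z = y := by
  have hz' : y - e z = h z := by
    rw [← hri (y - e z)]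
    exact congrArg h hz
  rw [← hz', sub_add_cancel]

end QuasiNewton

theorem stmt_0_general {X : Type*} [NormedAddCommGroup X] [CompleteSpace X]
    (h hinv e : X → X) (κ μ : ℝ) (hκ : 0 ≤ κ) (hμ : 0 ≤ μ)
    (hri : Function.RightInverse hinv h)
    (hinvLip : ∀ a b, ‖hinv a - hinv b‖ ≤ κ * ‖a - b‖)
    (heLip : ∀ a b, ‖e a - e b‖ ≤ μ * ‖a - b‖)
    (hκμ : κ * μ < 1)
    (y : X) (x : ℕ → X)
    (hrec : ∀ k, x (k + 1) = hinv (y - e (x k))) :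
    (∀ k, 1 ≤ k → ‖x (k + 1) - x k‖ ≤ κ * μ * ‖x k - x (k - 1)‖) ∧
    ∃ xs : X, Tendsto x atTop (nhds xs) ∧ h xs + e xs = y ∧
      ∀ k, ‖x k - xs‖ ≤ (κ * μ) ^ k * ‖x 1 - x 0‖ / (1 - κ * μ) := by
  have hT := contractingWith_quasiNewtonStep hκ hμ hκμ hinvLip heLip y
  have hstep : ∀ k, x (k + 1) = quasiNewtonStep hinv e y (x k) := hrec
  have hiter : x = fun k => (quasiNewtonStep hinv e y)^[k] (x 0) :=
    funext (eq_iterate_of_forall_succ_eq hstep)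
  have hK : ((κ * μ).toNNReal : ℝ) = κ * μ := Real.coe_toNNReal _ (mul_nonneg hκ hμ)
  refine ⟨fun k hk => ?_, ContractingWith.fixedPoint _ hT, ?_, ?_, fun k => ?_⟩
  · obtain ⟨k, rfl⟩ := Nat.exists_eq_add_of_le' hk
    rw [Nat.add_sub_cancel, hstep (k + 1), hstep k]
    exact norm_quasiNewtonStep_sub_le hκ hinvLip heLip y _ _
  · rw [hiter]
    exact hT.tendsto_iterate_fixedPoint (x 0)
  · exact add_eq_of_isFixedPt_quasiNewtonStep hri hT.fixedPoint_isFixedPt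
  · have hbound := hT.apriori_dist_iterate_fixedPoint_le (x 0) k
    rw [← congrFun hiter, hK, dist_eq_norm, dist_comm, dist_eq_norm, ← hstep] at hbound
    exact hbound.trans_eq (by ring)

/-- Quasi-Newton iteration for `f = h + e` with `h⁻¹` κ-Lipschitz and `e` μ-Lipschitz,
`κμ < 1`: the iterates contract geometrically and converge to a solution of
`h x + e x = y`. -/
theorem stmt_0 {X : Type*} [NormedAddCommGroup X] [NormedSpace ℝ X] [CompleteSpace X]
    (h hinv e : X → X) (κ μ : ℝ) (hκ : 0 ≤ κ) (hμ : 0 ≤ μ)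
    (hli : Function.LeftInverse hinv h) (hri : Function.RightInverse hinv h)
    (hinvLip : ∀ a b, ‖hinv a - hinv b‖ ≤ κ * ‖a - b‖)
    (heLip : ∀ a b, ‖e a - e b‖ ≤ μ * ‖a - b‖)
    (hκμ : κ * μ < 1)
    (y x₀ : X) (x : ℕ → X) (hx0 : x 0 = x₀)
    (hrec : ∀ k, x (k + 1) = hinv (y - e (x k))) :
    (∀ k, 1 ≤ k → ‖x (k + 1) - x k‖ ≤ κ * μ * ‖x k - x (k - 1)‖) ∧
    ∃ xs : X, Tendsto x atTop (nhds xs) ∧ h xs + e xs = y ∧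
      ∀ k, ‖x k - xs‖ ≤ (κ * μ) ^ k * ‖x 1 - x 0‖ / (1 - κ * μ) :=
  stmt_0_general h hinv e κ μ hκ hμ hri hinvLip heLip hκμ y x hrec
end

section
/- Let B be a real m × n matrix, d ∈ ℝᵐ, and λ ∈ ℝᵐ with 0 ≤ λⱼ ≤ 1 for each j. Define e : ℝⁿ → ℝᵐ componentwise by e(u)ⱼ = ((Bu + d)ⱼ)₋ − λⱼ (Bu + d)ⱼ. Then for all u, u' ∈ ℝⁿ, ‖e(u) − e(u')‖ ≤ (max_j max(λⱼ, 1 − λⱼ)) · ‖B‖ · ‖u − u'‖, where ‖·‖ denotes the Euclidean norm on ℝᵐ and ℝⁿ and ‖B‖ the associated operator norm. -/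
open Matrix

/-- Euclidean (ℓ²) operator norm of a real matrix. -/
noncomputable def matrixL2OpNorm {m n : ℕ} (A : Matrix (Fin m) (Fin n) ℝ) : ℝ :=
  ‖LinearMap.toContinuousLinearMap (Matrix.toEuclideanLin A)‖

lemma scalar_bound (lam a b : ℝ) (h0 : 0 ≤ lam) (h1 : lam ≤ 1) :
    |(min a 0 - lam * a) - (min b 0 - lam * b)| ≤ max lam (1 - lam) * |a - b| := by
  have hm1 : lam ≤ max lam (1 - lam) := le_max_left _ _
  have hm2 : 1 - lam ≤ max lam (1 - lam) := le_max_right _ _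
  simp only [min_def]
  rw [abs_le]
  split_ifs with ha hb hb <;> constructor <;>
    nlinarith [le_abs_self (a - b), neg_abs_le (a - b), abs_nonneg (a - b)]

lemma norm_le_of_ptwise {m : ℕ} (C : ℝ) (hC : 0 ≤ C) (x y : EuclideanSpace ℝ (Fin m))
    (h : ∀ j, |x j| ≤ C * |y j|) : ‖x‖ ≤ C * ‖y‖ := by
  rw [EuclideanSpace.norm_eq, EuclideanSpace.norm_eq, ← Real.sqrt_sq hC,
    ← Real.sqrt_mul (by positivity)]
  apply Real.sqrt_le_sqrt
  rw [Finset.mul_sum]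
  apply Finset.sum_le_sum
  intro j _
  have hj := h j
  have h1 : ‖x j‖ ^ 2 ≤ (C * |y j|) ^ 2 := by
    rw [Real.norm_eq_abs]
    nlinarith [abs_nonneg (x j)]
  calc ‖x j‖ ^ 2 ≤ (C * |y j|) ^ 2 := h1
    _ = C ^ 2 * ‖y j‖ ^ 2 := by rw [Real.norm_eq_abs]; ring

/-- The remainder `e(u) = (Bu + d)₋ − Λ(Bu + d)` (componentwise negative part, `Λ = diag(λ)`
with `0 ≤ λⱼ ≤ 1`) is Lipschitz for the Euclidean norms with constant
`(max_j max(λⱼ, 1 − λⱼ)) ‖B‖`. -/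
theorem stmt_2 {m n : ℕ} (B : Matrix (Fin m) (Fin n) ℝ) (d lam : Fin m → ℝ)
    (hlam : ∀ j, lam j ∈ Set.Icc (0:ℝ) 1)
    (e : EuclideanSpace ℝ (Fin n) → EuclideanSpace ℝ (Fin m))
    (he : ∀ (u : EuclideanSpace ℝ (Fin n)) (j : Fin m),
      e u j = min (B.mulVec (fun i => u i) j + d j) 0
        - lam j * (B.mulVec (fun i => u i) j + d j)) :
    ∀ u u' : EuclideanSpace ℝ (Fin n),
      ‖e u - e u'‖ ≤ (⨆ j, max (lam j) (1 - lam j)) * matrixL2OpNorm B * ‖u - u'‖ := by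
  intro u u'
  rcases Nat.eq_zero_or_pos m with hm | hm
  · subst hm
    have h0 : e u - e u' = 0 := Subsingleton.elim _ _
    have hsup : (⨆ j : Fin 0, max (lam j) (1 - lam j)) = 0 := by
      exact Real.iSup_of_isEmpty _
    rw [h0, norm_zero, hsup, zero_mul, zero_mul]
  · haveI : Nonempty (Fin m) := ⟨⟨0, hm⟩⟩
    set M := ⨆ j, max (lam j) (1 - lam j) with hMdef
    have hM : ∀ j, max (lam j) (1 - lam j) ≤ M := fun j =>
      le_ciSup (f := fun j => max (lam j) (1 - lam j)) (Set.Finite.bddAbove (Set.finite_range _)) j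
    have hM0 : 0 ≤ M := le_trans (le_trans (hlam (Classical.arbitrary _)).1
      (le_max_left _ _)) (hM _)
    set y : EuclideanSpace ℝ (Fin m) :=
      Matrix.toEuclideanLin B (u - u') with hy
    have hptwise : ∀ j, |(e u - e u') j| ≤ M * |y j| := by
      intro j
      have hsub : (e u - e u') j = e u j - e u' j := rfl
      have hyj : y j = B.mulVec (fun i => u i) j - B.mulVec (fun i => u' i) j := by
        have : y j = B.mulVec (fun i => u i - u' i) j := rfl
        rw [this]
        have : (fun i => u i - u' i) = (fun i => u i) - (fun i => u' i) := rfl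
        rw [this, Matrix.mulVec_sub]
        rfl
      rw [hsub, he u j, he u' j]
      have key := scalar_bound (lam j) (B.mulVec (fun i => u i) j + d j)
        (B.mulVec (fun i => u' i) j + d j) (hlam j).1 (hlam j).2
      have heq : B.mulVec (fun i => u i) j + d j - (B.mulVec (fun i => u' i) j + d j)
          = y j := by rw [hyj]; ring
      rw [heq] at key
      exact le_trans key (by
        apply mul_le_mul_of_nonneg_right (hM j) (abs_nonneg _))
    have h1 : ‖e u - e u'‖ ≤ M * ‖y‖ := norm_le_of_ptwise M hM0 _ _ hptwise
    have h2 : ‖y‖ ≤ matrixL2OpNorm B * ‖u - u'‖ := by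
      rw [hy]
      exact (LinearMap.toContinuousLinearMap (Matrix.toEuclideanLin B)).le_opNorm (u - u')
    calc ‖e u - e u'‖ ≤ M * ‖y‖ := h1
      _ ≤ M * (matrixL2OpNorm B * ‖u - u'‖) := by
          exact mul_le_mul_of_nonneg_left h2 hM0
      _ = M * matrixL2OpNorm B * ‖u - u'‖ := by ring
end

section
/- Let g : ℝ → ℝ be continuous and let x : ℝ → ℝ be twice differentiable with x''(θ) + x(θ) + g(θ) = 0 for all θ. Then x(2π) = x(0) and x'(2π) = x'(0) if and only if ∫₀^{2π} sin(s) g(s) ds = 0 and ∫₀^{2π} cos(s) g(s) ds = 0. -/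
/-!
Variation of constants: for a solution of `x'' + x = -g`, the functions
`cos θ · x - sin θ · x'` and `sin θ · x + cos θ · x'` have derivatives `sin θ · g` and
`-cos θ · g`. Integrating over a full period, where `cos` and `sin` return to their values at `0`,
turns the two integrals into `x(2π) - x(0)` and `x'(0) - x'(2π)`.
-/

open Real

section ForcedOscillator

variable {x v w g : ℝ → ℝ}

theorem hasDerivAt_cos_mul_sub_sin_mul {t : ℝ} (hx : HasDerivAt x (v t) t)
    (hv : HasDerivAt v (w t) t) :
    HasDerivAt (fun s => cos s * x s - sin s * v s) (-(sin t * (w t + x t))) t := by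
  refine (((hasDerivAt_cos t).mul hx).sub ((hasDerivAt_sin t).mul hv)).congr_deriv ?_
  ring

theorem hasDerivAt_sin_mul_add_cos_mul {t : ℝ} (hx : HasDerivAt x (v t) t)
    (hv : HasDerivAt v (w t) t) :
    HasDerivAt (fun s => sin s * x s + cos s * v s) (cos t * (w t + x t)) t := by
  refine (((hasDerivAt_sin t).mul hx).add ((hasDerivAt_cos t).mul hv)).congr_deriv ?_
  ring

variable (hg : Continuous g) (hx : ∀ t, HasDerivAt x (v t) t) (hv : ∀ t, HasDerivAt v (w t) t)
  (hode : ∀ t, w t + x t + g t = 0)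
include hg hx hv hode

theorem integral_sin_mul_eq_of_forced_oscillator (a b : ℝ) :
    ∫ s in a..b, sin s * g s = (cos b * x b - sin b * v b) - (cos a * x a - sin a * v a) := by
  have hF : ∀ t, HasDerivAt (fun s => cos s * x s - sin s * v s) (sin t * g t) t := fun t =>
    (hasDerivAt_cos_mul_sub_sin_mul (hx t) (hv t)).congr_deriv
      (by linear_combination -sin t * hode t)
  exact intervalIntegral.integral_eq_sub_of_hasDerivAt (fun t _ => hF t)
    ((continuous_sin.mul hg).intervalIntegrable a b)

theorem integral_cos_mul_eq_of_forced_oscillator (a b : ℝ) :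
    ∫ s in a..b, cos s * g s = (sin a * x a + cos a * v a) - (sin b * x b + cos b * v b) := by
  have hG : ∀ t, HasDerivAt (fun s => -(sin s * x s + cos s * v s)) (cos t * g t) t := fun t =>
    (hasDerivAt_sin_mul_add_cos_mul (hx t) (hv t)).neg.congr_deriv
      (by linear_combination -cos t * hode t)
  rw [intervalIntegral.integral_eq_sub_of_hasDerivAt (fun t _ => hG t)
    ((continuous_cos.mul hg).intervalIntegrable a b)]
  ring

end ForcedOscillator

/-- Periodicity criterion: a solution of `x'' + x + g = 0` matches its initial
position and velocity at `2π` iff the two Fourier-type integrals of `g` vanish. -/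
theorem stmt_5 (g : ℝ → ℝ) (hg : Continuous g) (x : ℝ → ℝ)
    (hx1 : Differentiable ℝ x) (hx2 : Differentiable ℝ (deriv x))
    (hode : ∀ θ : ℝ, deriv (deriv x) θ + x θ + g θ = 0) :
    (x (2 * π) = x 0 ∧ deriv x (2 * π) = deriv x 0) ↔
    ((∫ s in (0:ℝ)..(2 * π), Real.sin s * g s) = 0 ∧
      (∫ s in (0:ℝ)..(2 * π), Real.cos s * g s) = 0) := by
  have hx : ∀ t, HasDerivAt x (deriv x t) t := fun t => (hx1 t).hasDerivAt
  have hv : ∀ t, HasDerivAt (deriv x) (deriv (deriv x) t) t := fun t => (hx2 t).hasDerivAt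
  rw [integral_sin_mul_eq_of_forced_oscillator hg hx hv hode,
    integral_cos_mul_eq_of_forced_oscillator hg hx hv hode]
  simp only [cos_two_pi, sin_two_pi, cos_zero, sin_zero, zero_mul, one_mul, sub_zero, zero_add,
    sub_eq_zero]
  exact ⟨fun ⟨h₁, h₂⟩ => ⟨h₁, h₂.symm⟩, fun ⟨h₁, h₂⟩ => ⟨h₁, h₂.symm⟩⟩
end

section
/- Let a ∈ ℝ with a ≠ 0 and η ∈ ℝ, and let x₋ := (x − |x|)/2 = min(x, 0). Then ∫₀^{2π} sin(s) · (a cos(s))₋ ds = 0, and ∫₀^{2π} cos(s) · (−η a cos(s) + (a cos(s))₋) ds = 0 if and only if η = 1/2. -/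
/-!
The first integrand changes sign under `s ↦ 2π - s`. For the second, fold `[π, 2π]` onto
`[0, π]`: since `cos (s + π) = -cos s` and `min x 0 - min (-x) 0 = x`, the integrand
`cos s * (a cos s)₋` plus its shift by `π` is `a cos² s`, so its integral is `aπ/2` and the
second condition reads `aπ (1/2 - η) = 0`.
-/

open Real MeasureTheory

namespace intervalIntegral

variable {E : Type*} [NormedAddCommGroup E] [NormedSpace ℝ E]

theorem integral_eq_zero_of_comp_sub_eq_neg (f : ℝ → E) {a b : ℝ}
    (hf : ∀ x, f (a + b - x) = -f x) : ∫ x in a..b, f x = 0 := by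
  have hrefl := integral_comp_sub_left f (a + b) (a := a) (b := b)
  simp only [hf, integral_neg, add_sub_cancel_right, add_sub_cancel_left] at hrefl
  have htwice : (2 : ℝ) • ∫ x in a..b, f x = 0 := by
    rw [two_smul]; nth_rewrite 1 [← hrefl]; exact neg_add_cancel _
  exact (smul_eq_zero.mp htwice).resolve_left two_ne_zero

theorem integral_eq_integral_add_comp_add (f : ℝ → E) (a T : ℝ)
    (hf : IntervalIntegrable f volume a (a + 2 * T)) :
    ∫ x in a..a + 2 * T, f x = ∫ x in a..a + T, (f x + f (x + T)) := by
  have hmid : a + T ∈ Set.uIcc a (a + 2 * T) := by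
    rcases le_total 0 T with hT | hT
    · exact Set.mem_uIcc.mpr (Or.inl ⟨by linarith, by linarith⟩)
    · exact Set.mem_uIcc.mpr (Or.inr ⟨by linarith, by linarith⟩)
  have h₁ : IntervalIntegrable f volume a (a + T) :=
    hf.mono_set (Set.uIcc_subset_uIcc_left hmid)
  have h₂ : IntervalIntegrable f volume (a + T) (a + 2 * T) :=
    hf.mono_set (Set.uIcc_subset_uIcc_right hmid)
  have hshift : ∫ x in a..a + T, f (x + T) = ∫ x in a + T..a + 2 * T, f x := by
    rw [integral_comp_add_right]; ring_nf
  have h₂' : IntervalIntegrable (fun x ↦ f (x + T)) volume a (a + T) := by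
    have := h₂.comp_add_right T
    rwa [add_sub_cancel_right, show a + 2 * T - T = a + T by ring] at this
  rw [integral_add h₁ h₂', hshift, integral_add_adjacent_intervals h₁ h₂]

end intervalIntegral

theorem integral_sin_mul_comp_cos_eq_zero (g : ℝ → ℝ) :
    ∫ s in (0 : ℝ)..2 * π, sin s * g (cos s) = 0 :=
  intervalIntegral.integral_eq_zero_of_comp_sub_eq_neg _ fun s ↦ by
    rw [zero_add, sin_two_pi_sub, cos_two_pi_sub, neg_mul]

theorem min_zero_sub_min_neg_zero (x : ℝ) : min x 0 - min (-x) 0 = x := by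
  rcases le_total x 0 with hx | hx <;> simp [hx]

theorem integral_cos_mul_min_const_mul_cos (a : ℝ) :
    ∫ s in (0 : ℝ)..2 * π, cos s * min (a * cos s) 0 = a * π / 2 := by
  have hcont : Continuous fun s ↦ cos s * min (a * cos s) 0 := by fun_prop
  have hfold : ∀ s, cos s * min (a * cos s) 0 + cos (s + π) * min (a * cos (s + π)) 0
      = a * cos s ^ 2 := fun s ↦ by
    rw [cos_add_pi, mul_neg]
    linear_combination cos s * min_zero_sub_min_neg_zero (a * cos s)
  have := intervalIntegral.integral_eq_integral_add_comp_add _ 0 π (hcont.intervalIntegrable _ _)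
  rw [zero_add, zero_add] at this
  simp only [this, hfold, intervalIntegral.integral_const_mul, integral_cos_sq]
  simp; ring

theorem integral_cos_mul_unilateral_perturbation (a η : ℝ) :
    ∫ s in (0 : ℝ)..2 * π, cos s * (-η * a * cos s + min (a * cos s) 0) = a * π * (1 / 2 - η) := by
  have hsplit : ∀ s, cos s * (-η * a * cos s + min (a * cos s) 0)
      = -η * a * cos s ^ 2 + cos s * min (a * cos s) 0 := fun s ↦ by ring
  simp only [hsplit]
  rw [intervalIntegral.integral_add (Continuous.intervalIntegrable (by fun_prop) _ _)
    (Continuous.intervalIntegrable (by fun_prop) _ _), intervalIntegral.integral_const_mul,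
    integral_cos_sq, integral_cos_mul_min_const_mul_cos]
  simp; ring

/-- Leading-order periodicity conditions for the unilateral nonlinearity:
`∫₀^{2π} sin(s)(a cos s)₋ ds = 0` always, and the second condition forces the
frequency correction `η = 1/2`. Here `z₋ = min(z, 0)`. -/
theorem stmt_8 (a : ℝ) (ha : a ≠ 0) (η : ℝ) :
    (∫ s in (0:ℝ)..(2 * π), Real.sin s * min (a * Real.cos s) 0) = 0 ∧
    ((∫ s in (0:ℝ)..(2 * π),
        Real.cos s * (-η * a * Real.cos s + min (a * Real.cos s) 0)) = 0 ↔ η = 1 / 2) := by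
  refine ⟨integral_sin_mul_comp_cos_eq_zero fun c ↦ min (a * c) 0, ?_⟩
  rw [integral_cos_mul_unilateral_perturbation, mul_eq_zero, sub_eq_zero]
  simp [ha, pi_ne_zero, eq_comm]
end

section
/- Let k, μ ≥ 0, α ∈ ℝ, and let g : ℝ → ℝ be Lipschitz with constant k and satisfy |g(z) − αz| ≤ μ|z| for all z ∈ ℝ. Define f(x, η, ε) := −ηx + (1 − εη)g(x) and h(ξ, η, ε) := −ηξ + (1 − εη)αξ. Fix a ∈ ℝ and R > 0. For ε ≥ 0 and y = (η, b) with |η| ≤ R and |b| ≤ R, let x_y and ξ_y be continuous functions on [0, 2π] satisfying x_y(θ) = a cos θ + εb sin θ − ε ∫₀^θ sin(θ − s) f(x_y(s), η, ε) ds and ξ_y(θ) = a cos θ + εb sin θ − ε ∫₀^θ sin(θ − s) h(ξ_y(s), η, ε) ds, and set F(y) = (∫₀^{2π} sin(s) f(x_y(s), η, ε) ds, ∫₀^{2π} cos(s) f(x_y(s), η, ε) ds), H(y) defined analogously with h and ξ_y, and E := F − H. Then there exist constants C ≥ 0 and ε̄ > 0, depending only on k, μ, α, a, R, such that for all ε ∈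 [0, ε̄] and all y, ỹ with |η|, |b|, |η̃|, |b̃| ≤ R, ‖E(ỹ) − E(y)‖ ≤ C ε ‖ỹ − y‖. -/
/-!
For small `ε` the integral equations are `O(ε)`-perturbations of `a cos θ + ε b sin θ`, so a
sup-norm estimate `‖w‖ ≤ A + ε C ‖w‖` can be absorbed into `‖w‖ ≤ 2A`. This bounds `x_y` and
`ξ_y` uniformly, shows that they are `O(ε)`-Lipschitz in `y = (η, b)`, and that
`x_y - ξ_y = O(ε)`, as both have the same leading term. In `E(ỹ) - E(y)` the only contribution that
is not visibly `O(ε ‖ỹ - y‖)` is `(η̃ - η) (x_y - ξ_y)`, and it is so by the last estimate.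
-/

open Real MeasureTheory Set intervalIntegral

theorem abs_le_two_mul_of_abs_le_add_half_mul {T A D : ℝ} {u : ℝ → ℝ} (hT : 0 ≤ T)
    (hu : ContinuousOn u (Icc 0 T)) (hD : D ≤ 1 / 2)
    (h : ∀ M, (∀ s ∈ Icc 0 T, |u s| ≤ M) → ∀ θ ∈ Icc 0 T, |u θ| ≤ A + D * M) :
    ∀ θ ∈ Icc 0 T, |u θ| ≤ 2 * A := by
  obtain ⟨θ₀, hθ₀, hmax⟩ := isCompact_Icc.exists_isMaxOn (nonempty_Icc.2 hT) hu.abs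
  have hθ₀_le := h _ (fun s hs => hmax hs) θ₀ hθ₀
  intro θ hθ
  nlinarith [show |u θ| ≤ |u θ₀| from hmax hθ, mul_le_mul_of_nonneg_right hD (abs_nonneg (u θ₀))]

theorem continuous_of_abs_sub_le_mul {f : ℝ → ℝ} {c : ℝ} (hc : 0 ≤ c)
    (hf : ∀ z w, |f z - f w| ≤ c * |z - w|) : Continuous f :=
  (LipschitzWith.of_dist_le_mul (K := ⟨c, hc⟩) fun z w => hf z w).continuous

theorem intervalIntegrable_mul_of_continuousOn_Icc {w f : ℝ → ℝ} {T θ : ℝ} (hw : Continuous w)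
    (hf : ContinuousOn f (Icc 0 T)) (hθ : θ ∈ Icc 0 T) :
    IntervalIntegrable (fun s => w s * f s) volume 0 θ := by
  have hsub : uIcc 0 θ ⊆ Icc 0 T := by
    rw [uIcc_of_le hθ.1]; exact Icc_subset_Icc le_rfl hθ.2
  exact (hw.continuousOn.mul (hf.mono hsub)).intervalIntegrable

theorem abs_intervalIntegral_mul_le {w Φ : ℝ → ℝ} {T θ B : ℝ} (hw : ∀ s, |w s| ≤ 1)
    (hθ : θ ∈ Icc 0 T) (hΦ : ∀ s ∈ Icc 0 T, |Φ s| ≤ B) :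
    |∫ s in (0:ℝ)..θ, w s * Φ s| ≤ B * T := by
  have hB : 0 ≤ B := (abs_nonneg _).trans (hΦ 0 ⟨le_rfl, hθ.1.trans hθ.2⟩)
  have hint : ‖∫ s in (0:ℝ)..θ, w s * Φ s‖ ≤ B * |θ - 0| := by
    refine norm_integral_le_of_norm_le_const fun s hs => ?_
    rw [uIoc_of_le hθ.1] at hs
    rw [Real.norm_eq_abs, abs_mul]
    exact (mul_le_mul_of_nonneg_left (hΦ s ⟨hs.1.le, hs.2.trans hθ.2⟩) (abs_nonneg _)).trans
      (mul_le_of_le_one_left hB (hw s))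
  rw [Real.norm_eq_abs, sub_zero, abs_of_nonneg hθ.1] at hint
  exact hint.trans (mul_le_mul_of_nonneg_left hθ.2 hB)

theorem abs_intervalIntegral_sub_sub_le {w f₁ f₂ f₃ f₄ : ℝ → ℝ} {T B : ℝ} (hT : 0 ≤ T)
    (hw : Continuous w) (hw_le : ∀ s, |w s| ≤ 1) (hf₁ : ContinuousOn f₁ (Icc 0 T))
    (hf₂ : ContinuousOn f₂ (Icc 0 T)) (hf₃ : ContinuousOn f₃ (Icc 0 T))
    (hf₄ : ContinuousOn f₄ (Icc 0 T))
    (hB : ∀ s ∈ Icc 0 T, |f₁ s - f₂ s - (f₃ s - f₄ s)| ≤ B) :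
    |((∫ s in (0:ℝ)..T, w s * f₁ s) - ∫ s in (0:ℝ)..T, w s * f₂ s)
      - ((∫ s in (0:ℝ)..T, w s * f₃ s) - ∫ s in (0:ℝ)..T, w s * f₄ s)| ≤ B * T := by
  have hTmem : T ∈ Icc 0 T := ⟨hT, le_rfl⟩
  have hi := fun {f : ℝ → ℝ} (hf : ContinuousOn f (Icc 0 T)) =>
    intervalIntegrable_mul_of_continuousOn_Icc hw hf hTmem
  rw [← integral_sub (hi hf₁) (hi hf₂), ← integral_sub (hi hf₃) (hi hf₄),
    ← integral_sub ((hi hf₁).sub (hi hf₂)) ((hi hf₃).sub (hi hf₄))]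
  simp only [← mul_sub]
  exact abs_intervalIntegral_mul_le hw_le hTmem hB

/-- `u` solves `u'' + u + ε P(u) = 0`, `u(0) = a`, `u'(0) = ε b` on `[0, T]`, in
variation-of-constants form. -/
def IsDuhamelSolution (T a b ε : ℝ) (P u : ℝ → ℝ) : Prop :=
  ∀ θ ∈ Icc 0 T,
    u θ = a * cos θ + ε * b * sin θ - ε * ∫ s in (0:ℝ)..θ, sin (θ - s) * P (u s)

theorem abs_mul_cos_add_mul_sin_le (a c θ : ℝ) : |a * cos θ + c * sin θ| ≤ |a| + |c| := by
  refine (abs_add_le _ _).trans (add_le_add ?_ ?_) <;> rw [abs_mul]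
  · exact mul_le_of_le_one_right (abs_nonneg _) (abs_cos_le_one θ)
  · exact mul_le_of_le_one_right (abs_nonneg _) (abs_sin_le_one θ)

namespace IsDuhamelSolution

variable {T a b b' ε c₀ c₁ Q : ℝ} {P P' u u' : ℝ → ℝ}

theorem abs_le (hu : IsDuhamelSolution T a b ε P u) (hT : 0 ≤ T)
    (hcont : ContinuousOn u (Icc 0 T)) (hε : 0 ≤ ε) (hc₁ : 0 ≤ c₁)
    (hP : ∀ z, |P z| ≤ c₀ + c₁ * |z|) (hsmall : ε * T * c₁ ≤ 1 / 2) :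
    ∀ θ ∈ Icc 0 T, |u θ| ≤ 2 * (|a| + ε * (|b| + T * c₀)) := by
  refine abs_le_two_mul_of_abs_le_add_half_mul hT hcont hsmall fun M hM θ hθ => ?_
  have hI := abs_intervalIntegral_mul_le (w := fun s => sin (θ - s)) (fun _ => abs_sin_le_one _)
    hθ (Φ := fun s => P (u s)) (B := c₀ + c₁ * M)
    fun s hs => (hP _).trans (by gcongr; exact hM s hs)
  rw [hu θ hθ]
  calc |a * cos θ + ε * b * sin θ - ε * ∫ s in (0:ℝ)..θ, sin (θ - s) * P (u s)|
      ≤ (|a| + |ε * b|) + |ε| * |∫ s in (0:ℝ)..θ, sin (θ - s) * P (u s)| := by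
        rw [← abs_mul]
        refine (abs_sub _ _).trans ?_
        gcongr
        exact abs_mul_cos_add_mul_sin_le _ _ _
    _ ≤ (|a| + ε * |b|) + ε * ((c₀ + c₁ * M) * T) := by
        rw [abs_mul, abs_of_nonneg hε]; gcongr
    _ = |a| + ε * (|b| + T * c₀) + ε * T * c₁ * M := by ring

theorem abs_sub_le (hu : IsDuhamelSolution T a b ε P u) (hu' : IsDuhamelSolution T a b' ε P' u')
    (hT : 0 ≤ T) (hcont : ContinuousOn u (Icc 0 T)) (hcont' : ContinuousOn u' (Icc 0 T))
    (hP : Continuous P) (hc₁ : 0 ≤ c₁) (hP' : ∀ z w, |P' z - P' w| ≤ c₁ * |z - w|)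
    (hε : 0 ≤ ε) (hsmall : ε * T * c₁ ≤ 1 / 2)
    (hQ : ∀ s ∈ Icc 0 T, |P' (u s) - P (u s)| ≤ Q) :
    ∀ θ ∈ Icc 0 T, |u' θ - u θ| ≤ 2 * (ε * (|b' - b| + T * Q)) := by
  refine abs_le_two_mul_of_abs_le_add_half_mul hT (hcont'.sub hcont) hsmall fun M hM θ hθ => ?_
  have hw : Continuous fun s => sin (θ - s) := by fun_prop
  have hsplit : u' θ - u θ = (b' - b) * ε * sin θ
      - ε * ∫ s in (0:ℝ)..θ, sin (θ - s) * (P' (u' s) - P (u s)) := by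
    have hi' : IntervalIntegrable (fun s => sin (θ - s) * P' (u' s)) volume 0 θ :=
      intervalIntegrable_mul_of_continuousOn_Icc hw
        ((continuous_of_abs_sub_le_mul hc₁ hP').comp_continuousOn hcont') hθ
    have hi : IntervalIntegrable (fun s => sin (θ - s) * P (u s)) volume 0 θ :=
      intervalIntegrable_mul_of_continuousOn_Icc hw (hP.comp_continuousOn hcont) hθ
    simp only [mul_sub]
    rw [integral_sub hi' hi, hu θ hθ, hu' θ hθ]
    ring
  have hI := abs_intervalIntegral_mul_le (w := fun s => sin (θ - s)) (fun _ => abs_sin_le_one _)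
    hθ (Φ := fun s => P' (u' s) - P (u s)) (B := c₁ * M + Q) fun s hs => by
      calc |P' (u' s) - P (u s)| ≤ |P' (u' s) - P' (u s)| + |P' (u s) - P (u s)| :=
            _root_.abs_sub_le _ _ _
        _ ≤ c₁ * M + Q := by gcongr; exacts [(hP' _ _).trans (by gcongr; exact hM s hs), hQ s hs]
  rw [hsplit]
  calc |(b' - b) * ε * sin θ - ε * ∫ s in (0:ℝ)..θ, sin (θ - s) * (P' (u' s) - P (u s))|
      ≤ |b' - b| * ε + ε * ((c₁ * M + Q) * T) := by
        refine (abs_sub _ _).trans (add_le_add ?_ ?_)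
        · rw [abs_mul, abs_mul, abs_of_nonneg hε]
          exact mul_le_of_le_one_right (by positivity) (abs_sin_le_one θ)
        · rw [abs_mul, abs_of_nonneg hε]
          gcongr
    _ = ε * (|b' - b| + T * Q) + ε * T * c₁ * M := by ring

end IsDuhamelSolution

/-- In the paper's notation `f = forcing g` and `h = forcing (α * ·)`. -/
def forcing (ψ : ℝ → ℝ) (ε η z : ℝ) : ℝ := -η * z + (1 - ε * η) * ψ z

section forcing

variable {ψ χ : ℝ → ℝ} {ε η η' R L G : ℝ}

theorem abs_le_add_mul_of_abs_sub_le_mul {z M : ℝ} (hψ : ∀ z w, |ψ z - ψ w| ≤ L * |z - w|)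
    (hL : 0 ≤ L) (hψ0 : |ψ 0| ≤ G) (hz : |z| ≤ M) : |ψ z| ≤ G + L * M := by
  have := hψ z 0
  rw [sub_zero] at this
  nlinarith [abs_sub_abs_le_abs_sub (ψ z) (ψ 0), mul_le_mul_of_nonneg_left hz hL]

theorem abs_one_sub_mul_le (hε : ε ∈ Icc (0:ℝ) 1) (hη : |η| ≤ R) : |1 - ε * η| ≤ 1 + R := by
  calc |1 - ε * η| ≤ 1 + ε * |η| := by
        simpa [abs_mul, abs_of_nonneg hε.1] using abs_sub (1:ℝ) (ε * η)
    _ ≤ 1 + R := by nlinarith [mul_nonneg (sub_nonneg.2 hε.2) (abs_nonneg η)]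

theorem continuous_forcing (hψ : Continuous ψ) : Continuous (forcing ψ ε η) := by
  unfold forcing; fun_prop

theorem abs_forcing_sub_forcing_le (hψ : ∀ z w, |ψ z - ψ w| ≤ L * |z - w|)
    (hε : ε ∈ Icc (0:ℝ) 1) (hη : |η| ≤ R) (z w : ℝ) :
    |forcing ψ ε η z - forcing ψ ε η w| ≤ (R + (1 + R) * L) * |z - w| := by
  have hR : 0 ≤ R := (abs_nonneg η).trans hη
  calc |forcing ψ ε η z - forcing ψ ε η w| = |-(η * (z - w)) + (1 - ε * η) * (ψ z - ψ w)| := by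
        unfold forcing; ring_nf
    _ ≤ |η| * |z - w| + |1 - ε * η| * |ψ z - ψ w| := by
        rw [← abs_mul, ← abs_mul, ← abs_neg (η * (z - w))]; exact abs_add_le _ _
    _ ≤ R * |z - w| + (1 + R) * (L * |z - w|) := by
        gcongr; exacts [abs_one_sub_mul_le hε hη, hψ z w]
    _ = (R + (1 + R) * L) * |z - w| := by ring

theorem abs_forcing_le (hψ : ∀ z w, |ψ z - ψ w| ≤ L * |z - w|) (hψ0 : |ψ 0| ≤ G)
    (hε : ε ∈ Icc (0:ℝ) 1) (hη : |η| ≤ R) (z : ℝ) :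
    |forcing ψ ε η z| ≤ (1 + R) * G + (R + (1 + R) * L) * |z| := by
  have hR : 0 ≤ R := (abs_nonneg η).trans hη
  have h0 : |forcing ψ ε η 0| ≤ (1 + R) * G := by
    simp only [forcing, mul_zero, zero_add, abs_mul]
    gcongr; exact abs_one_sub_mul_le hε hη
  have h := abs_forcing_sub_forcing_le hψ hε hη z 0
  rw [sub_zero] at h
  linarith [abs_sub_abs_le_abs_sub (forcing ψ ε η z) (forcing ψ ε η 0)]

theorem ContinuousOn.forcing_comp {u : ℝ → ℝ} {s : Set ℝ} (hψ : Continuous ψ)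
    (hu : ContinuousOn u s) : ContinuousOn (fun t => forcing ψ ε η (u t)) s :=
  (continuous_forcing hψ).comp_continuousOn hu

theorem forcing_sub_forcing (ψ : ℝ → ℝ) (ε η η' z : ℝ) :
    forcing ψ ε η' z - forcing ψ ε η z = -((η' - η) * (z + ε * ψ z)) := by
  unfold forcing; ring

theorem abs_forcing_sub_sub_le (hψ : ∀ z w, |ψ z - ψ w| ≤ L * |z - w|)
    (hχ : ∀ z w, |χ z - χ w| ≤ L * |z - w|) (hε : ε ∈ Icc (0:ℝ) 1)
    (hη' : |η'| ≤ R) (z z' w w' : ℝ) :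
    |(forcing ψ ε η' z' - forcing χ ε η' w') - (forcing ψ ε η z - forcing χ ε η w)|
      ≤ (R + (1 + R) * L) * (|z' - z| + |w' - w|)
        + |η' - η| * (|z - w| + ε * (|ψ z| + |χ w|)) := by
  have hsplit : (forcing ψ ε η' z' - forcing χ ε η' w') - (forcing ψ ε η z - forcing χ ε η w)
      = (forcing ψ ε η' z' - forcing ψ ε η' z) - (forcing χ ε η' w' - forcing χ ε η' w)
        - (η' - η) * ((z - w) + ε * (ψ z - χ w)) := by
    linear_combination forcing_sub_forcing ψ ε η η' z - forcing_sub_forcing χ ε η η' w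
  have hrest : |(z - w) + ε * (ψ z - χ w)| ≤ |z - w| + ε * (|ψ z| + |χ w|) := by
    refine (abs_add_le _ _).trans ?_
    rw [abs_mul, abs_of_nonneg hε.1]
    exact add_le_add_right (mul_le_mul_of_nonneg_left (abs_sub _ _) hε.1) _
  rw [hsplit]
  refine (abs_sub _ _).trans ?_
  rw [abs_mul, mul_add]
  gcongr
  refine (abs_sub _ _).trans ?_
  exact add_le_add (abs_forcing_sub_forcing_le hψ hε hη' _ _)
    (abs_forcing_sub_forcing_le hχ hε hη' _ _)

end forcing

namespace IsDuhamelSolution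

variable {ψ χ : ℝ → ℝ} {T a b b' ε η η' R L G M N : ℝ} {u u' v : ℝ → ℝ}

theorem abs_le_of_forcing (hψ : ∀ z w, |ψ z - ψ w| ≤ L * |z - w|) (hL : 0 ≤ L)
    (hψ0 : |ψ 0| ≤ G) (hT : 0 ≤ T) (hε : ε ∈ Icc (0:ℝ) 1) (hη : |η| ≤ R) (hb : |b| ≤ R)
    (hsmall : ε * T * (R + (1 + R) * L) ≤ 1 / 2)
    (hu : IsDuhamelSolution T a b ε (forcing ψ ε η) u) (hcont : ContinuousOn u (Icc 0 T)) :
    ∀ θ ∈ Icc 0 T, |u θ| ≤ 2 * (|a| + R + T * ((1 + R) * G)) := by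
  have hR : 0 ≤ R := (abs_nonneg η).trans hη
  have hG : 0 ≤ G := (abs_nonneg _).trans hψ0
  intro θ hθ
  calc |u θ| ≤ 2 * (|a| + ε * (|b| + T * ((1 + R) * G))) :=
        hu.abs_le hT hcont hε.1 (by positivity) (abs_forcing_le hψ hψ0 hε hη) hsmall θ hθ
    _ ≤ 2 * (|a| + 1 * (R + T * ((1 + R) * G))) := by gcongr; exact hε.2
    _ = 2 * (|a| + R + T * ((1 + R) * G)) := by ring

theorem abs_sub_le_of_forcing_params (hψ : ∀ z w, |ψ z - ψ w| ≤ L * |z - w|) (hL : 0 ≤ L)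
    (hψ0 : |ψ 0| ≤ G) (hT : 0 ≤ T) (hε : ε ∈ Icc (0:ℝ) 1) (hη' : |η'| ≤ R)
    (hsmall : ε * T * (R + (1 + R) * L) ≤ 1 / 2)
    (hu : IsDuhamelSolution T a b ε (forcing ψ ε η) u)
    (hu' : IsDuhamelSolution T a b' ε (forcing ψ ε η') u')
    (hcont : ContinuousOn u (Icc 0 T)) (hcont' : ContinuousOn u' (Icc 0 T))
    (hM : ∀ s ∈ Icc 0 T, |u s| ≤ M) (hNη : |η' - η| ≤ N) (hNb : |b' - b| ≤ N) :
    ∀ θ ∈ Icc 0 T, |u' θ - u θ| ≤ 2 * ε * (1 + T * (M + G + L * M)) * N := by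
  have hR : 0 ≤ R := (abs_nonneg η').trans hη'
  have hN : 0 ≤ N := (abs_nonneg _).trans hNη
  have hQ : ∀ s ∈ Icc 0 T, |forcing ψ ε η' (u s) - forcing ψ ε η (u s)|
      ≤ N * (M + G + L * M) := fun s hs => by
    rw [forcing_sub_forcing, abs_neg, abs_mul]
    have hψu := abs_le_add_mul_of_abs_sub_le_mul hψ hL hψ0 (hM s hs)
    refine mul_le_mul hNη ((abs_add_le _ _).trans ?_) (abs_nonneg _) hN
    rw [abs_mul, abs_of_nonneg hε.1, add_assoc]
    gcongr
    · exact hM s hs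
    · exact (mul_le_of_le_one_left (abs_nonneg _) hε.2).trans hψu
  intro θ hθ
  have hG : 0 ≤ G := (abs_nonneg _).trans hψ0
  have hM0 : 0 ≤ M := (abs_nonneg _).trans (hM θ hθ)
  calc |u' θ - u θ| ≤ 2 * (ε * (|b' - b| + T * (N * (M + G + L * M)))) :=
        hu.abs_sub_le hu' hT hcont hcont' (continuous_forcing
          (continuous_of_abs_sub_le_mul hL hψ)) (by positivity)
          (abs_forcing_sub_forcing_le hψ hε hη') hε.1 hsmall hQ θ hθ
    _ ≤ 2 * (ε * (N + T * (N * (M + G + L * M)))) := by gcongr; exact hε.1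
    _ = 2 * ε * (1 + T * (M + G + L * M)) * N := by ring

theorem abs_sub_le_of_forcing_nonlinearities (hψ : ∀ z w, |ψ z - ψ w| ≤ L * |z - w|)
    (hχ : ∀ z w, |χ z - χ w| ≤ L * |z - w|) (hL : 0 ≤ L) (hψ0 : |ψ 0| ≤ G) (hχ0 : |χ 0| ≤ G)
    (hT : 0 ≤ T) (hε : ε ∈ Icc (0:ℝ) 1) (hη : |η| ≤ R)
    (hsmall : ε * T * (R + (1 + R) * L) ≤ 1 / 2)
    (hu : IsDuhamelSolution T a b ε (forcing ψ ε η) u)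
    (hv : IsDuhamelSolution T a b ε (forcing χ ε η) v)
    (hcont : ContinuousOn u (Icc 0 T)) (hcontv : ContinuousOn v (Icc 0 T))
    (hM : ∀ s ∈ Icc 0 T, |u s| ≤ M) :
    ∀ θ ∈ Icc 0 T, |v θ - u θ| ≤ 4 * ε * T * ((1 + R) * G + (R + (1 + R) * L) * M) := by
  have hR : 0 ≤ R := (abs_nonneg η).trans hη
  have hF : ∀ {φ : ℝ → ℝ}, (∀ z w, |φ z - φ w| ≤ L * |z - w|) → |φ 0| ≤ G →
      ∀ s ∈ Icc 0 T, |forcing φ ε η (u s)| ≤ (1 + R) * G + (R + (1 + R) * L) * M :=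
    fun hφ hφ0 s hs => (abs_forcing_le hφ hφ0 hε hη _).trans
      (add_le_add_right (mul_le_mul_of_nonneg_left (hM s hs) (by positivity)) _)
  intro θ hθ
  calc |v θ - u θ| ≤ 2 * (ε * (|b - b| + T * (2 * ((1 + R) * G + (R + (1 + R) * L) * M)))) :=
        hu.abs_sub_le hv hT hcont hcontv (continuous_forcing (continuous_of_abs_sub_le_mul hL hψ))
          (by positivity) (abs_forcing_sub_forcing_le hχ hε hη) hε.1 hsmall
          (fun s hs => (abs_sub _ _).trans (by linarith [hF hχ hχ0 s hs, hF hψ hψ0 s hs])) θ hθ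
    _ = 4 * ε * T * ((1 + R) * G + (R + (1 + R) * L) * M) := by rw [sub_self, abs_zero]; ring

end IsDuhamelSolution

theorem abs_forcing_sub_sub_le_of_isDuhamelSolution {ψ χ : ℝ → ℝ}
    {T a b b' ε η η' R L G M N : ℝ} {x x' ξ ξ' : ℝ → ℝ}
    (hψ : ∀ z w, |ψ z - ψ w| ≤ L * |z - w|) (hχ : ∀ z w, |χ z - χ w| ≤ L * |z - w|)
    (hL : 0 ≤ L) (hψ0 : |ψ 0| ≤ G) (hχ0 : |χ 0| ≤ G) (hT : 0 ≤ T) (hε : ε ∈ Icc (0:ℝ) 1)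
    (hη : |η| ≤ R) (hη' : |η'| ≤ R) (hsmall : ε * T * (R + (1 + R) * L) ≤ 1 / 2)
    (hNη : |η' - η| ≤ N) (hNb : |b' - b| ≤ N)
    (hx : IsDuhamelSolution T a b ε (forcing ψ ε η) x)
    (hx' : IsDuhamelSolution T a b' ε (forcing ψ ε η') x')
    (hξ : IsDuhamelSolution T a b ε (forcing χ ε η) ξ)
    (hξ' : IsDuhamelSolution T a b' ε (forcing χ ε η') ξ')
    (hxc : ContinuousOn x (Icc 0 T)) (hx'c : ContinuousOn x' (Icc 0 T))
    (hξc : ContinuousOn ξ (Icc 0 T)) (hξ'c : ContinuousOn ξ' (Icc 0 T))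
    (hxM : ∀ s ∈ Icc 0 T, |x s| ≤ M) (hξM : ∀ s ∈ Icc 0 T, |ξ s| ≤ M) :
    ∀ s ∈ Icc 0 T,
      |(forcing ψ ε η' (x' s) - forcing χ ε η' (ξ' s))
          - (forcing ψ ε η (x s) - forcing χ ε η (ξ s))|
        ≤ ε * (4 * (R + (1 + R) * L) * (1 + T * (M + G + L * M))
          + 4 * T * ((1 + R) * G + (R + (1 + R) * L) * M) + 2 * (G + L * M)) * N := by
  intro s hs
  have hR : 0 ≤ R := (abs_nonneg η).trans hη
  have hN : 0 ≤ N := (abs_nonneg _).trans hNη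
  have hxx' := hx.abs_sub_le_of_forcing_params hψ hL hψ0 hT hε hη' hsmall hx' hxc hx'c hxM
    hNη hNb s hs
  have hξξ' := hξ.abs_sub_le_of_forcing_params hχ hL hχ0 hT hε hη' hsmall hξ' hξc hξ'c hξM
    hNη hNb s hs
  have hxξ := hx.abs_sub_le_of_forcing_nonlinearities hψ hχ hL hψ0 hχ0 hT hε hη hsmall hξ hxc hξc
    hxM s hs
  have hψx := abs_le_add_mul_of_abs_sub_le_mul hψ hL hψ0 (hxM s hs)
  have hχξ := abs_le_add_mul_of_abs_sub_le_mul hχ hL hχ0 (hξM s hs)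
  rw [abs_sub_comm] at hxξ
  calc _ ≤ (R + (1 + R) * L) * (|x' s - x s| + |ξ' s - ξ s|)
        + |η' - η| * (|x s - ξ s| + ε * (|ψ (x s)| + |χ (ξ s)|)) :=
        abs_forcing_sub_sub_le hψ hχ hε hη' _ _ _ _
    _ ≤ (R + (1 + R) * L) * (2 * ε * (1 + T * (M + G + L * M)) * N
          + 2 * ε * (1 + T * (M + G + L * M)) * N)
        + N * (4 * ε * T * ((1 + R) * G + (R + (1 + R) * L) * M)
          + ε * ((G + L * M) + (G + L * M))) := by
        have hε0 : 0 ≤ ε := hε.1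
        gcongr
    _ = _ := by ring

theorem stmt_14_general (k : ℝ) (hk : 0 ≤ k) (α : ℝ)
    (g : ℝ → ℝ) (hg : ∀ z w : ℝ, |g z - g w| ≤ k * |z - w|)
    (a R : ℝ) (hR : 0 < R) :
    ∃ C : ℝ, 0 ≤ C ∧ ∃ εbar : ℝ, 0 < εbar ∧
      ∀ ε : ℝ, ε ∈ Set.Icc (0:ℝ) εbar →
      ∀ η b η' b' : ℝ, |η| ≤ R → |b| ≤ R → |η'| ≤ R → |b'| ≤ R →
      ∀ x x' ξ ξ' : ℝ → ℝ,
        ContinuousOn x (Set.Icc 0 (2 * π)) → ContinuousOn x' (Set.Icc 0 (2 * π)) →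
        ContinuousOn ξ (Set.Icc 0 (2 * π)) → ContinuousOn ξ' (Set.Icc 0 (2 * π)) →
        (∀ θ ∈ Set.Icc (0:ℝ) (2 * π),
          x θ = a * Real.cos θ + ε * b * Real.sin θ
            - ε * ∫ s in (0:ℝ)..θ, Real.sin (θ - s) * (-η * x s + (1 - ε * η) * g (x s))) →
        (∀ θ ∈ Set.Icc (0:ℝ) (2 * π),
          x' θ = a * Real.cos θ + ε * b' * Real.sin θ
            - ε * ∫ s in (0:ℝ)..θ, Real.sin (θ - s) * (-η' * x' s + (1 - ε * η') * g (x' s))) →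
        (∀ θ ∈ Set.Icc (0:ℝ) (2 * π),
          ξ θ = a * Real.cos θ + ε * b * Real.sin θ
            - ε * ∫ s in (0:ℝ)..θ, Real.sin (θ - s) * (-η * ξ s + (1 - ε * η) * (α * ξ s))) →
        (∀ θ ∈ Set.Icc (0:ℝ) (2 * π),
          ξ' θ = a * Real.cos θ + ε * b' * Real.sin θ
            - ε * ∫ s in (0:ℝ)..θ, Real.sin (θ - s) * (-η' * ξ' s + (1 - ε * η') * (α * ξ' s))) →
        ‖(((∫ s in (0:ℝ)..(2 * π), Real.sin s * (-η' * x' s + (1 - ε * η') * g (x' s)))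
            - (∫ s in (0:ℝ)..(2 * π), Real.sin s * (-η' * ξ' s + (1 - ε * η') * (α * ξ' s))))
          - ((∫ s in (0:ℝ)..(2 * π), Real.sin s * (-η * x s + (1 - ε * η) * g (x s)))
            - (∫ s in (0:ℝ)..(2 * π), Real.sin s * (-η * ξ s + (1 - ε * η) * (α * ξ s)))),
          ((∫ s in (0:ℝ)..(2 * π), Real.cos s * (-η' * x' s + (1 - ε * η') * g (x' s)))
            - (∫ s in (0:ℝ)..(2 * π), Real.cos s * (-η' * ξ' s + (1 - ε * η') * (α * ξ' s))))
          - ((∫ s in (0:ℝ)..(2 * π), Real.cos s * (-η * x s + (1 - ε * η) * g (x s)))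
            - (∫ s in (0:ℝ)..(2 * π), Real.cos s * (-η * ξ s + (1 - ε * η) * (α * ξ s)))))‖
        ≤ C * ε * ‖((η' - η, b' - b) : ℝ × ℝ)‖ := by
  set L := k + |α|
  set G := |g 0|
  set c₁ := R + (1 + R) * L
  set M := 2 * (|a| + R + 2 * π * ((1 + R) * G))
  set K := 4 * c₁ * (1 + 2 * π * (M + G + L * M)) + 4 * (2 * π) * ((1 + R) * G + c₁ * M)
    + 2 * (G + L * M)
  have hT : 0 ≤ 2 * π := by positivity
  refine ⟨2 * π * K, by positivity, min 1 (1 / (2 * (2 * π * c₁ + 1))), by positivity, ?_⟩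
  intro ε hε η b η' b' hη hb hη' hb' x x' ξ ξ' hxc hx'c hξc hξ'c hx hx' hξ hξ'
  have hε1 : ε ∈ Icc (0:ℝ) 1 := ⟨hε.1, hε.2.trans (min_le_left _ _)⟩
  have hsmall : ε * (2 * π) * c₁ ≤ 1 / 2 := by
    have := (le_div_iff₀ (by positivity)).1 (hε.2.trans (min_le_right _ _))
    nlinarith [hε.1]
  have hgL : ∀ z w, |g z - g w| ≤ L * |z - w| := fun z w =>
    (hg z w).trans (by gcongr; exact le_add_of_nonneg_right (abs_nonneg α))
  have hαL : ∀ z w, |α * z - α * w| ≤ L * |z - w| := fun z w => by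
    rw [← mul_sub, abs_mul]; gcongr; exact le_add_of_nonneg_left hk
  have hα0 : |α * 0| ≤ G := by simp [G]
  have hL : 0 ≤ L := by positivity
  have hxM := IsDuhamelSolution.abs_le_of_forcing hgL hL le_rfl hT hε1 hη hb hsmall hx hxc
  have hξM := IsDuhamelSolution.abs_le_of_forcing hαL hL hα0 hT hε1 hη hb hsmall hξ hξc
  set N := ‖((η' - η, b' - b) : ℝ × ℝ)‖
  have hD := abs_forcing_sub_sub_le_of_isDuhamelSolution hgL hαL hL le_rfl hα0 hT hε1 hη hη'
    hsmall (norm_fst_le ((η' - η, b' - b) : ℝ × ℝ)) (norm_snd_le ((η' - η, b' - b) : ℝ × ℝ))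
    hx hx' hξ hξ' hxc hx'c hξc hξ'c hxM hξM
  have hgc := continuous_of_abs_sub_le_mul hL hgL
  have hαc : Continuous (fun z => α * z) := by fun_prop
  have hE := fun {w : ℝ → ℝ} (hw : Continuous w) (hw_le : ∀ s, |w s| ≤ 1) =>
    (abs_intervalIntegral_sub_sub_le hT hw hw_le (hx'c.forcing_comp hgc) (hξ'c.forcing_comp hαc)
      (hxc.forcing_comp hgc) (hξc.forcing_comp hαc) hD).trans_eq
      (by ring : _ = 2 * π * K * ε * N)
  rw [Prod.norm_def, Real.norm_eq_abs, Real.norm_eq_abs]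
  exact max_le (hE continuous_sin abs_sin_le_one) (hE continuous_cos abs_cos_le_one)

/-- `H` is a strict estimator of `F` uniformly in `p = (a, ε)`: the Lipschitz modulus of
`E = F − H` with respect to `y = (η, b)` is at most `Cε`. Here `f(x,η,ε) = −ηx + (1−εη)g(x)`,
`h(ξ,η,ε) = −ηξ + (1−εη)αξ`, and `x_y`, `ξ_y` solve the corresponding integral equations. -/
theorem stmt_14 (k μ : ℝ) (hk : 0 ≤ k) (hμ : 0 ≤ μ) (α : ℝ)
    (g : ℝ → ℝ) (hg : ∀ z w : ℝ, |g z - g w| ≤ k * |z - w|)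
    (hgα : ∀ z : ℝ, |g z - α * z| ≤ μ * |z|)
    (a R : ℝ) (hR : 0 < R) :
    ∃ C : ℝ, 0 ≤ C ∧ ∃ εbar : ℝ, 0 < εbar ∧
      ∀ ε : ℝ, ε ∈ Set.Icc (0:ℝ) εbar →
      ∀ η b η' b' : ℝ, |η| ≤ R → |b| ≤ R → |η'| ≤ R → |b'| ≤ R →
      ∀ x x' ξ ξ' : ℝ → ℝ,
        ContinuousOn x (Set.Icc 0 (2 * π)) → ContinuousOn x' (Set.Icc 0 (2 * π)) →
        ContinuousOn ξ (Set.Icc 0 (2 * π)) → ContinuousOn ξ' (Set.Icc 0 (2 * π)) →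
        (∀ θ ∈ Set.Icc (0:ℝ) (2 * π),
          x θ = a * Real.cos θ + ε * b * Real.sin θ
            - ε * ∫ s in (0:ℝ)..θ, Real.sin (θ - s) * (-η * x s + (1 - ε * η) * g (x s))) →
        (∀ θ ∈ Set.Icc (0:ℝ) (2 * π),
          x' θ = a * Real.cos θ + ε * b' * Real.sin θ
            - ε * ∫ s in (0:ℝ)..θ, Real.sin (θ - s) * (-η' * x' s + (1 - ε * η') * g (x' s))) →
        (∀ θ ∈ Set.Icc (0:ℝ) (2 * π),
          ξ θ = a * Real.cos θ + ε * b * Real.sin θ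
            - ε * ∫ s in (0:ℝ)..θ, Real.sin (θ - s) * (-η * ξ s + (1 - ε * η) * (α * ξ s))) →
        (∀ θ ∈ Set.Icc (0:ℝ) (2 * π),
          ξ' θ = a * Real.cos θ + ε * b' * Real.sin θ
            - ε * ∫ s in (0:ℝ)..θ, Real.sin (θ - s) * (-η' * ξ' s + (1 - ε * η') * (α * ξ' s))) →
        ‖(((∫ s in (0:ℝ)..(2 * π), Real.sin s * (-η' * x' s + (1 - ε * η') * g (x' s)))
            - (∫ s in (0:ℝ)..(2 * π), Real.sin s * (-η' * ξ' s + (1 - ε * η') * (α * ξ' s))))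
          - ((∫ s in (0:ℝ)..(2 * π), Real.sin s * (-η * x s + (1 - ε * η) * g (x s)))
            - (∫ s in (0:ℝ)..(2 * π), Real.sin s * (-η * ξ s + (1 - ε * η) * (α * ξ s)))),
          ((∫ s in (0:ℝ)..(2 * π), Real.cos s * (-η' * x' s + (1 - ε * η') * g (x' s)))
            - (∫ s in (0:ℝ)..(2 * π), Real.cos s * (-η' * ξ' s + (1 - ε * η') * (α * ξ' s))))
          - ((∫ s in (0:ℝ)..(2 * π), Real.cos s * (-η * x s + (1 - ε * η) * g (x s)))
            - (∫ s in (0:ℝ)..(2 * π), Real.cos s * (-η * ξ s + (1 - ε * η) * (α * ξ s)))))‖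
        ≤ C * ε * ‖((η' - η, b' - b) : ℝ × ℝ)‖ :=
  stmt_14_general k hk α g hg a R hR
end

section
/- Let x₋ := (x − |x|)/2 = min(x, 0). For every a ∈ ℝ with a ≠ 0 there exists ε̄ ∈ (0, 1) such that for every ε ∈ [0, ε̄] there exist η, b ∈ ℝ with 1 − εη > 0 and a twice differentiable function x : ℝ → ℝ satisfying x''(θ) + (1 − εη)x(θ) + ε(1 − εη)(x(θ))₋ = 0 for all θ ∈ ℝ, x(0) = a, x'(0) = εb, and x(θ + 2π) = x(θ) for all θ ∈ ℝ. Consequently, x̃(t) := x(t/√(1 − εη)) is a nonconstant periodic solution of x̃''(t) + x̃(t) + ε (x̃(t))₋ = 0 of period 2π√(1 − εη). -/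
open Real

/-!
Where `x ≥ 0` the strained equation is `x'' + ω² x = 0` (`ω² = 1 - εη`), where `x ≤ 0` it is
`x'' + ω₂² x = 0` with `ω₂ = ω √(1 + ε)`. A positive half-wave `cos (ω θ)` of length `π / ω` and a
negative half-wave `-(ω / ω₂) cos (ω₂ (θ - π))` of length `π / ω₂` meet with value `0`, slope `∓ω`
and second derivative `0`, so when `π / ω + π / ω₂ = 2π` their `2π`-periodic extension is a
solution. That condition fixes `ω = (1 + 1 / √(1 + ε)) / 2`, hence `η`. A nonnegative multiple of a
translate of this wave, centred at a crest or a trough according to the sign of `a`, satisfies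
`x(0) = a`, `x'(0) = 0`, and rescaling time by `ω` solves the original equation.
-/

section Gluing

variable {F G F' G' : ℝ → ℝ} {c : ℝ}

theorem HasDerivAt.ite_lt_self {f' : ℝ} (hF : HasDerivAt F f' c) (hG : HasDerivAt G f' c)
    (hc : F c = G c) : HasDerivAt (fun t => if t < c then F t else G t) f' c := by
  have hl : HasDerivWithinAt (fun t => if t < c then F t else G t) f' (Set.Iic c) c := by
    refine hF.hasDerivWithinAt.congr (fun t ht => ?_) (by simp [hc])
    rcases (Set.mem_Iic.1 ht).lt_or_eq with h | rfl
    · simp [h]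
    · simp [hc]
  have hr : HasDerivWithinAt (fun t => if t < c then F t else G t) f' (Set.Ici c) c :=
    hG.hasDerivWithinAt.congr (fun t ht => by simp [not_lt.2 (Set.mem_Ici.1 ht)]) (by simp)
  simpa using hl.union hr

theorem hasDerivAt_ite_lt (hF : ∀ t, HasDerivAt F (F' t) t) (hG : ∀ t, HasDerivAt G (G' t) t)
    (hc : F c = G c) (hc' : F' c = G' c) (t : ℝ) :
    HasDerivAt (fun t => if t < c then F t else G t) (if t < c then F' t else G' t) t := by
  rcases lt_trichotomy t c with h | rfl | h
  · rw [if_pos h]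
    refine (hF t).congr_of_eventuallyEq ?_
    filter_upwards [Iio_mem_nhds h] with s hs
    simp [Set.mem_Iio.1 hs]
  · rw [if_neg (lt_irrefl t)]
    exact ((hF t).congr_deriv hc').ite_lt_self (hG t) hc
  · rw [if_neg (not_lt.2 h.le)]
    refine (hG t).congr_of_eventuallyEq ?_
    filter_upwards [Ioi_mem_nhds h] with s hs
    simp [not_lt.2 (Set.mem_Ioi.1 hs).le]

end Gluing

theorem hasDerivAt_comp_toIcoMod {p : ℝ} (hp : 0 < p) (a : ℝ) {g g' : ℝ → ℝ}
    (hg : ∀ t, HasDerivAt g (g' t) t) (hgp : g (a + p) = g a) (hgp' : g' (a + p) = g' a)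
    (θ : ℝ) : HasDerivAt (fun θ => g (toIcoMod hp a θ)) (g' (toIcoMod hp a θ)) θ := by
  have hwindow : ∀ s ∈ Set.Ico a (a + p),
      HasDerivAt (fun θ => g (toIcoMod hp a θ)) (g' s) s := by
    rintro s ⟨has, hsp⟩
    rcases has.eq_or_lt with rfl | has
    · have hglue : HasDerivAt (fun t => if t < a then g (t + p) else g t) (g' a) a :=
        (((hg (a + p)).comp_add_const a p).congr_deriv hgp').ite_lt_self (hg a) hgp
      refine hglue.congr_of_eventuallyEq ?_
      filter_upwards [Ioo_mem_nhds (by linarith : a - p < a) hsp]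
        with t ⟨hlt, htp⟩
      split_ifs with hts
      · rw [← toIcoMod_add_right, (toIcoMod_eq_self hp).2 ⟨by linarith, by linarith⟩]
      · rw [(toIcoMod_eq_self hp).2 ⟨not_lt.1 hts, htp⟩]
    · refine (hg s).congr_of_eventuallyEq ?_
      filter_upwards [Ioo_mem_nhds has hsp] with t ht
      rw [(toIcoMod_eq_self hp).2 (Set.Ioo_subset_Ico_self ht)]
  have hθ : θ - toIcoDiv hp a θ • p = toIcoMod hp a θ := by
    rw [← self_sub_toIcoMod, sub_sub_cancel]
  have h := HasDerivAt.comp_sub_const θ (toIcoDiv hp a θ • p)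
    (hθ ▸ hwindow _ (toIcoMod_mem_Ico hp a θ))
  simpa only [toIcoMod_sub_zsmul, hθ] using h

/-- `x'' + ω² (x + ε x₋) = 0` with `x' = v`: the strained equation when `ω² = 1 - εη`. -/
structure IsUnilateralSolution (ω ε : ℝ) (x v : ℝ → ℝ) : Prop where
  hasDerivAt : ∀ θ, HasDerivAt x (v θ) θ
  hasDerivAt_vel : ∀ θ, HasDerivAt v (-(ω ^ 2 * (x θ + ε * min (x θ) 0))) θ

namespace IsUnilateralSolution

variable {ω ε : ℝ} {x v : ℝ → ℝ}

theorem deriv_eq (h : IsUnilateralSolution ω ε x v) : deriv x = v :=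
  funext fun θ => (h.hasDerivAt θ).deriv

theorem differentiable (h : IsUnilateralSolution ω ε x v) : Differentiable ℝ x :=
  fun θ => (h.hasDerivAt θ).differentiableAt

theorem differentiable_deriv (h : IsUnilateralSolution ω ε x v) : Differentiable ℝ (deriv x) :=
  h.deriv_eq ▸ fun θ => (h.hasDerivAt_vel θ).differentiableAt

theorem deriv_deriv (h : IsUnilateralSolution ω ε x v) (θ : ℝ) :
    deriv (deriv x) θ = -(ω ^ 2 * (x θ + ε * min (x θ) 0)) := by
  rw [h.deriv_eq, (h.hasDerivAt_vel θ).deriv]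

theorem const_mul (h : IsUnilateralSolution ω ε x v) {c : ℝ} (hc : 0 ≤ c) :
    IsUnilateralSolution ω ε (fun θ => c * x θ) (fun θ => c * v θ) where
  hasDerivAt θ := (h.hasDerivAt θ).const_mul c
  hasDerivAt_vel θ := by
    refine ((h.hasDerivAt_vel θ).const_mul c).congr_deriv ?_
    rw [← mul_zero c, ← mul_min_of_nonneg _ _ hc, mul_zero]
    ring

theorem comp_add_const (h : IsUnilateralSolution ω ε x v) (s : ℝ) :
    IsUnilateralSolution ω ε (fun θ => x (θ + s)) (fun θ => v (θ + s)) where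
  hasDerivAt θ := (h.hasDerivAt (θ + s)).comp_add_const θ s
  hasDerivAt_vel θ := (h.hasDerivAt_vel (θ + s)).comp_add_const θ s

theorem comp_div_const (h : IsUnilateralSolution ω ε x v) (hω : ω ≠ 0) :
    IsUnilateralSolution 1 ε (fun t => x (t / ω)) (fun t => v (t / ω) / ω) where
  hasDerivAt t := by
    have := (h.hasDerivAt (t / ω)).comp t ((hasDerivAt_id t).div_const ω)
    exact this.congr_deriv (by simp [div_eq_mul_inv])
  hasDerivAt_vel t := by
    have := ((h.hasDerivAt_vel (t / ω)).comp t ((hasDerivAt_id t).div_const ω)).div_const ω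
    exact this.congr_deriv (by field_simp)

end IsUnilateralSolution

/-- One period of the wave, on the window `[-π / (2ω), 2π - π / (2ω))`. -/
noncomputable def profile (ω ω₂ t : ℝ) : ℝ :=
  if t < π / (2 * ω) then cos (ω * t) else -(ω / ω₂) * cos (ω₂ * (t - π))

noncomputable def profileVel (ω ω₂ t : ℝ) : ℝ :=
  if t < π / (2 * ω) then -(ω * sin (ω * t)) else ω * sin (ω₂ * (t - π))

noncomputable def profileAccel (ω ω₂ t : ℝ) : ℝ :=
  if t < π / (2 * ω) then -(ω ^ 2 * cos (ω * t)) else ω * ω₂ * cos (ω₂ * (t - π))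

section Profile

variable {ω ω₂ : ℝ}

theorem mul_quarter_period (hω : ω ≠ 0) : ω * (π / (2 * ω)) = π / 2 := by
  field_simp

theorem mul_quarter_period_sub_pi (hω₂ : ω₂ ≠ 0) (hsum : ω⁻¹ + ω₂⁻¹ = 2) :
    ω₂ * (π / (2 * ω) - π) = -(π / 2) := by
  have hω : ω⁻¹ = 2 - ω₂⁻¹ := by linarith
  rw [div_mul_eq_div_div_swap, div_eq_mul_inv π ω, hω]
  field_simp
  ring

theorem quarter_period_lt_pi (hω : 0 < ω) (hω₂ : 0 < ω₂) (hsum : ω⁻¹ + ω₂⁻¹ = 2) :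
    π / (2 * ω) < π := by
  have h : 2⁻¹ < ω := (inv_lt_comm₀ hω two_pos).1 (by linarith [inv_pos.2 hω₂])
  rw [div_lt_iff₀ (by positivity)]
  nlinarith [pi_pos]

theorem mul_neg_quarter_period_add_pi (hω₂ : ω₂ ≠ 0) (hsum : ω⁻¹ + ω₂⁻¹ = 2) :
    ω₂ * (-(π / (2 * ω)) + 2 * π - π) = π / 2 := by
  linear_combination -mul_quarter_period_sub_pi hω₂ hsum

theorem hasDerivAt_profile (hω : ω ≠ 0) (hω₂ : ω₂ ≠ 0) (hsum : ω⁻¹ + ω₂⁻¹ = 2) (t : ℝ) :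
    HasDerivAt (profile ω ω₂) (profileVel ω ω₂ t) t := by
  unfold profile profileVel
  apply hasDerivAt_ite_lt <;> try intro t
  · exact ((hasDerivAt_id' t).const_mul ω).cos.congr_deriv (by ring)
  · exact ((((hasDerivAt_id' t).sub_const π).const_mul ω₂).cos.const_mul _).congr_deriv
      (by field_simp)
  · simp [mul_quarter_period hω, mul_quarter_period_sub_pi hω₂ hsum]
  · simp [mul_quarter_period hω, mul_quarter_period_sub_pi hω₂ hsum]

theorem hasDerivAt_profileVel (hω : ω ≠ 0) (hω₂ : ω₂ ≠ 0) (hsum : ω⁻¹ + ω₂⁻¹ = 2) (t : ℝ) :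
    HasDerivAt (profileVel ω ω₂) (profileAccel ω ω₂ t) t := by
  unfold profileVel profileAccel
  apply hasDerivAt_ite_lt <;> try intro t
  · exact (((hasDerivAt_id' t).const_mul ω).sin.const_mul ω).neg.congr_deriv (by ring)
  · exact ((((hasDerivAt_id' t).sub_const π).const_mul ω₂).sin.const_mul ω).congr_deriv
      (by ring)
  · simp [mul_quarter_period hω, mul_quarter_period_sub_pi hω₂ hsum]
  · simp [mul_quarter_period hω, mul_quarter_period_sub_pi hω₂ hsum]

theorem profileAccel_eq {ε : ℝ} (hω : 0 < ω) (hω₂ : 0 < ω₂) (hsum : ω⁻¹ + ω₂⁻¹ = 2)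
    (hsq : ω₂ ^ 2 = ω ^ 2 * (1 + ε)) {t : ℝ}
    (ht : t ∈ Set.Ico (-(π / (2 * ω))) (-(π / (2 * ω)) + 2 * π)) :
    profileAccel ω ω₂ t = -(ω ^ 2 * (profile ω ω₂ t + ε * min (profile ω ω₂ t) 0)) := by
  unfold profile profileAccel
  split_ifs with hpos
  · have hcos : 0 ≤ cos (ω * t) := by
      have h := mul_quarter_period hω.ne'
      apply cos_nonneg_of_neg_pi_div_two_le_of_le <;> nlinarith [ht.1]
    rw [min_eq_right hcos]
    ring
  · have hcos : 0 ≤ cos (ω₂ * (t - π)) := by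
      have h₁ := mul_quarter_period_sub_pi hω₂.ne' hsum
      have h₂ := mul_neg_quarter_period_add_pi hω₂.ne' hsum
      apply cos_nonneg_of_neg_pi_div_two_le_of_le <;> nlinarith [ht.2]
    rw [min_eq_left (mul_nonpos_of_nonpos_of_nonneg (neg_nonpos.2 (by positivity)) hcos)]
    field_simp
    linear_combination cos (ω₂ * (t - π)) * hsq

end Profile

noncomputable def wave (ω ω₂ θ : ℝ) : ℝ :=
  profile ω ω₂ (toIcoMod two_pi_pos (-(π / (2 * ω))) θ)

noncomputable def waveVel (ω ω₂ θ : ℝ) : ℝ :=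
  profileVel ω ω₂ (toIcoMod two_pi_pos (-(π / (2 * ω))) θ)

section Wave

variable {ω ω₂ : ℝ}

theorem isUnilateralSolution_wave {ε : ℝ} (hω : 0 < ω) (hω₂ : 0 < ω₂) (hsum : ω⁻¹ + ω₂⁻¹ = 2)
    (hsq : ω₂ ^ 2 = ω ^ 2 * (1 + ε)) :
    IsUnilateralSolution ω ε (wave ω ω₂) (waveVel ω ω₂) := by
  have hstart : -(π / (2 * ω)) < π / (2 * ω) := by linarith [(by positivity : 0 < π / (2 * ω))]
  have hend : ¬ -(π / (2 * ω)) + 2 * π < π / (2 * ω) := by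
    linarith [quarter_period_lt_pi hω hω₂ hsum]
  have hω' := mul_quarter_period hω.ne'
  have hω₂' := mul_neg_quarter_period_add_pi hω₂.ne' hsum
  constructor
  · refine hasDerivAt_comp_toIcoMod two_pi_pos _
      (hasDerivAt_profile hω.ne' hω₂.ne' hsum) ?_ ?_
    · simp [profile, hstart, hend, hω', hω₂']
    · simp [profileVel, hstart, hend, hω', hω₂']
  · intro θ
    refine (hasDerivAt_comp_toIcoMod two_pi_pos _
      (hasDerivAt_profileVel hω.ne' hω₂.ne' hsum) ?_ ?_ θ).congr_deriv
      (profileAccel_eq hω hω₂ hsum hsq (toIcoMod_mem_Ico _ _ _))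
    · simp [profileVel, hstart, hend, hω', hω₂']
    · simp [profileAccel, hstart, hend, hω', hω₂']

theorem toIcoMod_wave_eq_self {t : ℝ} (hω : 0 < ω) (hω₂ : 0 < ω₂) (hsum : ω⁻¹ + ω₂⁻¹ = 2)
    (h₀ : 0 ≤ t) (hπ : t ≤ π) : toIcoMod two_pi_pos (-(π / (2 * ω))) t = t :=
  (toIcoMod_eq_self _).2 ⟨by linarith [(by positivity : 0 < π / (2 * ω))],
    by linarith [quarter_period_lt_pi hω hω₂ hsum]⟩

theorem wave_zero (hω : 0 < ω) (hω₂ : 0 < ω₂) (hsum : ω⁻¹ + ω₂⁻¹ = 2) :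
    wave ω ω₂ 0 = 1 ∧ waveVel ω ω₂ 0 = 0 := by
  simp [wave, waveVel, toIcoMod_wave_eq_self hω hω₂ hsum le_rfl pi_pos.le, profile, profileVel,
    (by positivity : 0 < π / (2 * ω))]

theorem wave_pi (hω : 0 < ω) (hω₂ : 0 < ω₂) (hsum : ω⁻¹ + ω₂⁻¹ = 2) :
    wave ω ω₂ π = -(ω / ω₂) ∧ waveVel ω ω₂ π = 0 := by
  simp [wave, waveVel, toIcoMod_wave_eq_self hω hω₂ hsum pi_pos.le le_rfl, profile, profileVel,
    (quarter_period_lt_pi hω hω₂ hsum).le]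

theorem wave_quarter_period (hω : 0 < ω) (hω₂ : 0 < ω₂) (hsum : ω⁻¹ + ω₂⁻¹ = 2) :
    wave ω ω₂ (π / (2 * ω)) = 0 := by
  simp [wave, toIcoMod_wave_eq_self hω hω₂ hsum (by positivity : 0 < π / (2 * ω)).le
    (quarter_period_lt_pi hω hω₂ hsum).le, profile, mul_quarter_period_sub_pi hω₂.ne' hsum]

theorem periodic_wave (ω ω₂ : ℝ) : Function.Periodic (wave ω ω₂) (2 * π) := fun θ => by
  simp [wave, toIcoMod_add_right]

end Wave

theorem exists_frequencies {ε : ℝ} (hε : 0 ≤ ε) :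
    ∃ ω ω₂ : ℝ, 0 < ω ∧ 0 < ω₂ ∧ ω⁻¹ + ω₂⁻¹ = 2 ∧ ω₂ ^ 2 = ω ^ 2 * (1 + ε) ∧ (ε = 0 → ω = 1) := by
  set s := √(1 + ε)
  have hs : 1 ≤ s := one_le_sqrt.2 (by linarith)
  have hs2 : s ^ 2 = 1 + ε := sq_sqrt (by linarith)
  refine ⟨(s + 1) / (2 * s), (s + 1) / 2, by positivity, by positivity, ?_, ?_, ?_⟩
  · field_simp
  · rw [← hs2]
    field_simp
  · rintro rfl
    norm_num [s]

theorem exists_periodic_solution {ε : ℝ} (hε : 0 ≤ ε) (a : ℝ) :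
    ∃ ω > 0, (ε = 0 → ω = 1) ∧ ∃ x v : ℝ → ℝ, IsUnilateralSolution ω ε x v ∧
      x 0 = a ∧ v 0 = 0 ∧ Function.Periodic x (2 * π) ∧ ∃ θ₀, x θ₀ = 0 := by
  obtain ⟨ω, ω₂, hω, hω₂, hsum, hsq, hω1⟩ := exists_frequencies hε
  obtain ⟨θ₁, hx₁, hv₁, hscale⟩ : ∃ θ₁, wave ω ω₂ θ₁ ≠ 0 ∧ waveVel ω ω₂ θ₁ = 0 ∧
      0 ≤ a / wave ω ω₂ θ₁ := by
    rcases le_or_gt 0 a with ha | ha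
    · obtain ⟨h₁, h₂⟩ := wave_zero hω hω₂ hsum
      exact ⟨0, by simp [h₁], h₂, by simpa [h₁]⟩
    · obtain ⟨h₁, h₂⟩ := wave_pi hω hω₂ hsum
      have htrough : -(ω / ω₂) < 0 := neg_neg_of_pos (div_pos hω hω₂)
      exact ⟨π, h₁ ▸ htrough.ne, h₂, h₁ ▸ div_nonneg_of_nonpos ha.le htrough.le⟩
  refine ⟨ω, hω, hω1, _, _,
    ((isUnilateralSolution_wave hω hω₂ hsum hsq).comp_add_const θ₁).const_mul hscale,
    ?_, ?_, fun θ => ?_, π / (2 * ω) - θ₁, ?_⟩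
  · simp [div_mul_cancel₀ _ hx₁]
  · simp [hv₁]
  · simp only [add_right_comm θ, periodic_wave ω ω₂ (θ + θ₁)]
  · simp [wave_quarter_period hω hω₂ hsum]

/-- Existence of periodic solutions for the 1-d.o.f. oscillator with a weak unilateral
spring: for small `ε` the strained equation `x'' + (1−εη)x + ε(1−εη)x₋ = 0` has a
`2π`-periodic solution with `x(0) = a`, `x'(0) = εb`; consequently
`x̃(t) = x(t/√(1−εη))` is a nonconstant periodic solution of `x̃'' + x̃ + ε x̃₋ = 0`
of period `2π√(1−εη)`. Here `z₋ = min(z, 0)`. -/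
theorem stmt_15 (a : ℝ) (ha : a ≠ 0) :
    ∃ εbar ∈ Set.Ioo (0:ℝ) 1, ∀ ε ∈ Set.Icc (0:ℝ) εbar, ∃ η b : ℝ, 0 < 1 - ε * η ∧
      ∃ x : ℝ → ℝ, Differentiable ℝ x ∧ Differentiable ℝ (deriv x) ∧
        (∀ θ : ℝ,
          deriv (deriv x) θ + (1 - ε * η) * x θ + ε * (1 - ε * η) * min (x θ) 0 = 0) ∧
        x 0 = a ∧ deriv x 0 = ε * b ∧ (∀ θ : ℝ, x (θ + 2 * π) = x θ) ∧
        (∀ t : ℝ,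
          deriv (deriv (fun u : ℝ => x (u / Real.sqrt (1 - ε * η)))) t
            + x (t / Real.sqrt (1 - ε * η))
            + ε * min (x (t / Real.sqrt (1 - ε * η))) 0 = 0) ∧
        (∀ t : ℝ, x ((t + 2 * π * Real.sqrt (1 - ε * η)) / Real.sqrt (1 - ε * η))
            = x (t / Real.sqrt (1 - ε * η))) ∧
        (∃ t t' : ℝ, x (t / Real.sqrt (1 - ε * η)) ≠ x (t' / Real.sqrt (1 - ε * η))) := by
  refine ⟨1 / 2, ⟨by norm_num, by norm_num⟩, fun ε hε => ?_⟩
  obtain ⟨ω, hω, hω1, x, v, hx, hx0, hv0, hper, θ₀, hθ₀⟩ := exists_periodic_solution hε.1 a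
  -- at `ε = 0` the junk value `η = 0 / 0 = 0` is right, because then `ω = 1`
  have hη : 1 - ε * ((1 - ω ^ 2) / ε) = ω ^ 2 := by
    rcases eq_or_ne ε 0 with rfl | hε0
    · simp [hω1 rfl]
    · rw [mul_div_cancel₀ _ hε0]; ring
  have hsqrt : √(1 - ε * ((1 - ω ^ 2) / ε)) = ω := by rw [hη, sqrt_sq hω.le]
  have hy := hx.comp_div_const hω.ne'
  refine ⟨(1 - ω ^ 2) / ε, 0, by rw [hη]; positivity, x, hx.differentiable, hx.differentiable_deriv,
    fun θ => ?_, hx0, by rw [hx.deriv_eq, hv0, mul_zero], hper, ?_⟩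
  · rw [hx.deriv_deriv, hη]; ring
  simp only [hsqrt]
  refine ⟨fun t => ?_, fun t => ?_, 0, ω * θ₀, ?_⟩
  · rw [hy.deriv_deriv]; ring
  · rw [add_div, mul_div_cancel_right₀ _ hω.ne', hper]
  · rwa [zero_div, hx0, mul_div_cancel_left₀ _ hω.ne', hθ₀]
end

section
/- Let n ≥ 1 and r₁, …, rₙ > 0, set ρ := max_j max(1, 1/r_j), let k ≥ 0, and let f : ℝⁿ × ℝ × ℝ → ℝⁿ satisfy ‖f(x̌, η̌, ε̌) − f(x, η, ε)‖_∞ ≤ k(‖x̌ − x‖_∞ + |η̌ − η| + |ε̌ − ε|) for all arguments. Let ε ≥ 0, a ∈ ℝⁿ, and let b, b̌ ∈ ℝⁿ, η, η̌ ∈ ℝ, and let x, x̌ : [0, 2π] → ℝⁿ be continuous functions satisfying, for each component j and all θ ∈ [0, 2π], x_j(θ) = a_j cos(r_jθ) + (b_j/r_j) sin(r_jθ) − (ε/r_j) ∫₀^θ sin(r_j(θ − s)) f_j(x(s), η, ε) ds, and the same equations for x̌ with (b̌, η̌) in place of (b, η). If 2πρεk < 1, then sup_{θ ∈ [0, 2π]}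 ‖x̌(θ) − x(θ)‖_∞ ≤ ρ(‖b̌ − b‖_∞ + 2πεk |η̌ − η|) / (1 − 2πρεk). -/
open Real Set MeasureTheory intervalIntegral

/-!
Let `M` be the maximum of `‖x̌ − x‖_∞` on `[0, 2π]`. Subtracting the two integral equations, the
`j`-th component of `x̌(θ) − x(θ)` is `((b̌_j − b_j)/r_j) sin(r_jθ)` minus `ε/r_j` times an integral
of length `θ ≤ 2π` whose integrand is bounded by `k (M + |η̌ − η|)`. Hence
`M ≤ ρ‖b̌ − b‖_∞ + 2πρεk (M + |η̌ − η|)`, and since `2πρεk < 1` this can be solved for `M`.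
-/

lemma one_div_le_iSup_max_one_div {ι : Type*} [Finite ι] (r : ι → ℝ) (j : ι) :
    1 / r j ≤ ⨆ i, max 1 (1 / r i) :=
  (le_max_right _ _).trans
    (le_ciSup (f := fun i => max 1 (1 / r i)) (Set.finite_range _).bddAbove j)

lemma continuous_of_norm_sub_le_mul {E F : Type*} [SeminormedAddCommGroup E]
    [SeminormedAddCommGroup F] {f : E → ℝ → ℝ → F} {k : ℝ}
    (hf : ∀ (x x' : E) (η η' ε ε' : ℝ),
      ‖f x' η' ε' - f x η ε‖ ≤ k * (‖x' - x‖ + |η' - η| + |ε' - ε|)) (η ε : ℝ) :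
    Continuous fun x => f x η ε :=
  (LipschitzWith.of_dist_le' (K := k) fun x x' => by
    simpa [dist_eq_norm] using hf x' x η η ε ε).continuous

lemma abs_apply_sub_le_of_norm_sub_le_mul {E ι : Type*} [SeminormedAddCommGroup E] [Fintype ι]
    {f : E → ℝ → ℝ → ι → ℝ} {k : ℝ}
    (hf : ∀ (x x' : E) (η η' ε ε' : ℝ),
      ‖f x' η' ε' - f x η ε‖ ≤ k * (‖x' - x‖ + |η' - η| + |ε' - ε|))
    (x x' : E) (η η' ε : ℝ) (j : ι) :
    |f x' η' ε j - f x η ε j| ≤ k * (‖x' - x‖ + |η' - η|) := by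
  simpa using (norm_le_pi_norm (f x' η' ε - f x η ε) j).trans (hf x x' η η' ε ε)

lemma norm_le_div_of_norm_le_add_mul_bound {α E : Type*} [TopologicalSpace α]
    [SeminormedAddCommGroup E] {S : Set α} {D : α → E} {A c : ℝ} (hS : IsCompact S)
    (hD : ContinuousOn D S) (hc : c < 1)
    (h : ∀ M, (∀ s ∈ S, ‖D s‖ ≤ M) → ∀ s ∈ S, ‖D s‖ ≤ A + c * M) :
    ∀ s ∈ S, ‖D s‖ ≤ A / (1 - c) := by
  intro s hs
  obtain ⟨s₀, hs₀, hmax⟩ := hS.exists_isMaxOn ⟨s, hs⟩ hD.norm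
  have hM : ‖D s₀‖ ≤ A + c * ‖D s₀‖ := h _ (fun t ht => hmax ht) s₀ hs₀
  rw [le_div_iff₀ (by linarith)]
  calc ‖D s‖ * (1 - c) ≤ ‖D s₀‖ * (1 - c) := mul_le_mul_of_nonneg_right (hmax hs) (by linarith)
    _ ≤ A := by linarith

lemma abs_integral_sin_mul_le {r θ C : ℝ} {g : ℝ → ℝ} (hθ : 0 ≤ θ)
    (hg : ∀ s ∈ Ioc 0 θ, |g s| ≤ C) :
    |∫ s in (0:ℝ)..θ, sin (r * (θ - s)) * g s| ≤ C * θ := by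
  have := norm_integral_le_of_norm_le_const (a := 0) (b := θ) (C := C)
    (f := fun s => sin (r * (θ - s)) * g s) fun s hs => by
      rw [uIoc_of_le hθ] at hs
      rw [Real.norm_eq_abs, abs_mul]
      exact (mul_le_of_le_one_left (abs_nonneg _) (abs_sin_le_one _)).trans (hg s hs)
  simpa [abs_of_nonneg hθ] using this

lemma abs_sub_le_of_eq_cos_sin_sub_integral {r ε θ C a b b' u u' : ℝ} {g g' : ℝ → ℝ}
    (hr : 0 < r) (hε : 0 ≤ ε) (hθ : 0 ≤ θ)
    (hg : ContinuousOn g (Icc 0 θ)) (hg' : ContinuousOn g' (Icc 0 θ))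
    (hu : u = a * cos (r * θ) + b / r * sin (r * θ)
      - ε / r * ∫ s in (0:ℝ)..θ, sin (r * (θ - s)) * g s)
    (hu' : u' = a * cos (r * θ) + b' / r * sin (r * θ)
      - ε / r * ∫ s in (0:ℝ)..θ, sin (r * (θ - s)) * g' s)
    (hC : ∀ s ∈ Ioc 0 θ, |g' s - g s| ≤ C) :
    |u' - u| ≤ (|b' - b| + ε * (C * θ)) / r := by
  have hint : ∀ h : ℝ → ℝ, ContinuousOn h (Icc 0 θ) →
      IntervalIntegrable (fun s => sin (r * (θ - s)) * h s) volume 0 θ := fun h hh =>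
    ((by fun_prop : Continuous fun s => sin (r * (θ - s))).continuousOn.mul
      (uIcc_of_le hθ ▸ hh)).intervalIntegrable
  have hI : ∫ s in (0:ℝ)..θ, sin (r * (θ - s)) * (g' s - g s)
      = (∫ s in (0:ℝ)..θ, sin (r * (θ - s)) * g' s)
        - ∫ s in (0:ℝ)..θ, sin (r * (θ - s)) * g s := by
    rw [← integral_sub (hint g' hg') (hint g hg)]
    simp only [mul_sub]
  have hdiff : u' - u = ((b' - b) * sin (r * θ)
      - ε * ∫ s in (0:ℝ)..θ, sin (r * (θ - s)) * (g' s - g s)) / r := by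
    rw [hI, hu, hu']
    field_simp
    ring
  rw [hdiff, abs_div, abs_of_pos hr]
  gcongr
  calc _ ≤ |(b' - b) * sin (r * θ)|
        + |ε * ∫ s in (0:ℝ)..θ, sin (r * (θ - s)) * (g' s - g s)| := abs_sub _ _
    _ ≤ |b' - b| + ε * (C * θ) := by
      rw [abs_mul, abs_mul, abs_of_nonneg hε]
      gcongr
      · exact mul_le_of_le_one_right (abs_nonneg _) (abs_sin_le_one _)
      · exact abs_integral_sin_mul_le hθ hC

theorem stmt_17_general (n : ℕ) (r : Fin n → ℝ) (hr : ∀ j, 0 < r j)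
    (ρ : ℝ) (hρ : ρ = ⨆ j, max 1 (1 / r j))
    (k : ℝ) (hk : 0 ≤ k)
    (f : (Fin n → ℝ) → ℝ → ℝ → (Fin n → ℝ))
    (hf : ∀ (x x' : Fin n → ℝ) (η η' ε ε' : ℝ),
      ‖f x' η' ε' - f x η ε‖ ≤ k * (‖x' - x‖ + |η' - η| + |ε' - ε|))
    (ε : ℝ) (hε : 0 ≤ ε) (a b b' : Fin n → ℝ) (η η' : ℝ)
    (x x' : ℝ → Fin n → ℝ)
    (hxc : ContinuousOn x (Set.Icc 0 (2 * π)))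
    (hx'c : ContinuousOn x' (Set.Icc 0 (2 * π)))
    (hx : ∀ j : Fin n, ∀ θ ∈ Set.Icc (0:ℝ) (2 * π),
      x θ j = a j * Real.cos (r j * θ) + (b j / r j) * Real.sin (r j * θ)
        - (ε / r j) * ∫ s in (0:ℝ)..θ, Real.sin (r j * (θ - s)) * f (x s) η ε j)
    (hx' : ∀ j : Fin n, ∀ θ ∈ Set.Icc (0:ℝ) (2 * π),
      x' θ j = a j * Real.cos (r j * θ) + (b' j / r j) * Real.sin (r j * θ)
        - (ε / r j) * ∫ s in (0:ℝ)..θ, Real.sin (r j * (θ - s)) * f (x' s) η' ε j)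
    (hsmall : 2 * π * ρ * ε * k < 1) :
    ∀ θ ∈ Set.Icc (0:ℝ) (2 * π),
      ‖x' θ - x θ‖ ≤ ρ * (‖b' - b‖ + 2 * π * ε * k * |η' - η|) / (1 - 2 * π * ρ * ε * k) := by
  have hρ0 : 0 ≤ ρ := hρ ▸ Real.iSup_nonneg fun j => zero_le_one.trans (le_max_left _ _)
  have hρr : ∀ j, 1 / r j ≤ ρ := fun j => hρ ▸ one_div_le_iSup_max_one_div r j
  rw [show ρ * (‖b' - b‖ + 2 * π * ε * k * |η' - η|)
    = ρ * ‖b' - b‖ + 2 * π * ρ * ε * k * |η' - η| by ring]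
  refine norm_le_div_of_norm_le_add_mul_bound isCompact_Icc (hx'c.sub hxc) hsmall
    fun M hM θ hθ => ?_
  have hM0 : 0 ≤ M := (norm_nonneg _).trans (hM 0 ⟨le_rfl, by positivity⟩)
  have hcont : ∀ (y : ℝ → Fin n → ℝ) (ζ : ℝ) (j : Fin n), ContinuousOn y (Icc 0 (2 * π)) →
      ContinuousOn (fun s => f (y s) ζ ε j) (Icc 0 θ) := fun y ζ j hy =>
    ((continuous_apply j).comp (continuous_of_norm_sub_le_mul hf ζ ε)).comp_continuousOn
      (hy.mono (Icc_subset_Icc le_rfl hθ.2))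
  have hforcing : ∀ j, ∀ s ∈ Ioc 0 θ,
      |f (x' s) η' ε j - f (x s) η ε j| ≤ k * (M + |η' - η|) := fun j s hs =>
    (abs_apply_sub_le_of_norm_sub_le_mul hf _ _ _ _ _ j).trans
      (by gcongr; exact hM s ⟨hs.1.le, hs.2.trans hθ.2⟩)
  refine (pi_norm_le_iff_of_nonneg (by positivity)).2 fun j => ?_
  calc ‖x' θ j - x θ j‖ ≤ (|b' j - b j| + ε * (k * (M + |η' - η|) * θ)) / r j :=
        abs_sub_le_of_eq_cos_sin_sub_integral (hr j) hε hθ.1 (hcont x η j hxc)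
          (hcont x' η' j hx'c) (hx j θ hθ) (hx' j θ hθ) (hforcing j)
    _ = 1 / r j * (|b' j - b j| + ε * (k * (M + |η' - η|) * θ)) := by ring
    _ ≤ ρ * (‖b' - b‖ + ε * (k * (M + |η' - η|) * (2 * π))) := by
        have hb : |b' j - b j| ≤ ‖b' - b‖ := norm_le_pi_norm (b' - b) j
        have hθ₀ := hθ.1
        exact mul_le_mul (hρr j) (by gcongr; exact hθ.2) (by positivity) hρ0
    _ = ρ * ‖b' - b‖ + 2 * π * ρ * ε * k * |η' - η| + 2 * π * ρ * ε * k * M := by ring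

/-- System version of the Lipschitz-dependence lemma: solutions of the modal integral
equations `x_j(θ) = a_j cos(r_jθ) + (b_j/r_j) sin(r_jθ) − (ε/r_j) ∫₀^θ sin(r_j(θ−s)) f_j(x(s),η,ε) ds`
depend Lipschitz-continuously on `y = (η, b)` (sup norm `‖·‖` on `ℝⁿ`). -/
theorem stmt_17 (n : ℕ) (hn : 1 ≤ n) (r : Fin n → ℝ) (hr : ∀ j, 0 < r j)
    (ρ : ℝ) (hρ : ρ = ⨆ j, max 1 (1 / r j))
    (k : ℝ) (hk : 0 ≤ k)
    (f : (Fin n → ℝ) → ℝ → ℝ → (Fin n → ℝ))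
    (hf : ∀ (x x' : Fin n → ℝ) (η η' ε ε' : ℝ),
      ‖f x' η' ε' - f x η ε‖ ≤ k * (‖x' - x‖ + |η' - η| + |ε' - ε|))
    (ε : ℝ) (hε : 0 ≤ ε) (a b b' : Fin n → ℝ) (η η' : ℝ)
    (x x' : ℝ → Fin n → ℝ)
    (hxc : ContinuousOn x (Set.Icc 0 (2 * π)))
    (hx'c : ContinuousOn x' (Set.Icc 0 (2 * π)))
    (hx : ∀ j : Fin n, ∀ θ ∈ Set.Icc (0:ℝ) (2 * π),
      x θ j = a j * Real.cos (r j * θ) + (b j / r j) * Real.sin (r j * θ)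
        - (ε / r j) * ∫ s in (0:ℝ)..θ, Real.sin (r j * (θ - s)) * f (x s) η ε j)
    (hx' : ∀ j : Fin n, ∀ θ ∈ Set.Icc (0:ℝ) (2 * π),
      x' θ j = a j * Real.cos (r j * θ) + (b' j / r j) * Real.sin (r j * θ)
        - (ε / r j) * ∫ s in (0:ℝ)..θ, Real.sin (r j * (θ - s)) * f (x' s) η' ε j)
    (hsmall : 2 * π * ρ * ε * k < 1) :
    ∀ θ ∈ Set.Icc (0:ℝ) (2 * π),
      ‖x' θ - x θ‖ ≤ ρ * (‖b' - b‖ + 2 * π * ε * k * |η' - η|) / (1 - 2 * π * ρ * ε * k) :=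
  stmt_17_general n r hr ρ hρ k hk f hf ε hε a b b' η η' x x' hxc hx'c hx hx' hsmall
end
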